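/- arXiv:1705.09340 — 10 statements merged into one kernel-verified Lean document; each statement's English description precedes it below -/
import Mathlib

section
/- Let $(x_n)$ be defined by $x_{n+1} = (1-\alpha_{n+1})x_n + \alpha_{n+1}y_n$ with $y_{-1}=x_0$, $\alpha_0=1$, $\alpha_n\in[0,1]$, and $\pi_i^n = \alpha_i\prod_{k=i+1}^n(1-\alpha_k)$. Then for all $0 \leq m \leq n$, $x_m - x_n = \sum_{i=0}^m \sum_{j=m+1}^n \pi_i^m \pi_j^n (y_{i-1} - y_{j-1})$. -/
/-!
Unrolling the recursion from step `m` gives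
`x n = c • x m + ∑_{m < j ≤ n} π j n • Y j` with `c = ∏_{m < k ≤ n} (1 - α k)`, and the same
identity for the constant sequences `x = Y = 1` shows `∑_{m < j ≤ n} π j n = 1 - c`. Since
`α 0 = 1` and `Y 0 = x 0`, the case `m = 0` writes `x m` as an affine combination `∑_{i ≤ m} π i m • Y i`.
Expanding the double sum of `π i m * π j n • (Y i - Y j)` gives `(1 - c) • x m - ∑_{m < j ≤ n} π j n • Y j`,
which is `x m - x n`.
-/

open Finset

namespace AveragedIteration

variable {R M : Type*} [CommRing R] [AddCommGroup M] [Module R M]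

/-- The weight `π i n = α i * ∏_{k=i+1}^n (1 - α k)` of `Y i` in `x n`. -/
def weight (α : ℕ → R) (i n : ℕ) : R := α i * ∏ k ∈ Icc (i + 1) n, (1 - α k)

lemma weight_self (α : ℕ → R) (n : ℕ) : weight α n n = α n := by
  simp [weight]

lemma weight_succ (α : ℕ → R) {i n : ℕ} (h : i ≤ n) :
    weight α i (n + 1) = (1 - α (n + 1)) * weight α i n := by
  rw [weight, weight, prod_Icc_succ_top (by omega)]
  ring

lemma eq_prod_smul_add_sum_weight_smul (α : ℕ → R) (x Y : ℕ → M)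
    (hrec : ∀ n, x (n + 1) = (1 - α (n + 1)) • x n + α (n + 1) • Y (n + 1))
    {m n : ℕ} (hmn : m ≤ n) :
    x n = (∏ k ∈ Icc (m + 1) n, (1 - α k)) • x m + ∑ j ∈ Icc (m + 1) n, weight α j n • Y j := by
  induction n, hmn using Nat.le_induction with
  | base => simp
  | succ n hmn ih =>
    have hweights : ∀ j ∈ Icc (m + 1) n,
        weight α j (n + 1) • Y j = (1 - α (n + 1)) • weight α j n • Y j := fun j hj => by
      rw [weight_succ α (mem_Icc.1 hj).2, mul_smul]
    rw [hrec, ih, prod_Icc_succ_top (by omega), sum_Icc_succ_top (by omega), sum_congr rfl hweights,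
      ← smul_sum, weight_self, smul_add, smul_smul, mul_comm, add_assoc]

lemma one_sub_prod_eq_sum_weight (α : ℕ → R) {m n : ℕ} (hmn : m ≤ n) :
    1 - ∏ k ∈ Icc (m + 1) n, (1 - α k) = ∑ j ∈ Icc (m + 1) n, weight α j n := by
  have h := eq_prod_smul_add_sum_weight_smul α (fun _ => (1 : R)) (fun _ => 1)
    (fun n => by simp) hmn
  simp only [smul_eq_mul, mul_one] at h
  rw [sub_eq_iff_eq_add', ← h]

lemma eq_sum_weight_smul (α : ℕ → R) (x Y : ℕ → M) (hα0 : α 0 = 1) (hY0 : Y 0 = x 0)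
    (hrec : ∀ n, x (n + 1) = (1 - α (n + 1)) • x n + α (n + 1) • Y (n + 1)) (n : ℕ) :
    x n = ∑ i ∈ range (n + 1), weight α i n • Y i := by
  have hprod : ∏ k ∈ Icc 1 n, (1 - α k) = weight α 0 n := by rw [weight, hα0, one_mul]
  rw [eq_prod_smul_add_sum_weight_smul α x Y hrec (Nat.zero_le n), hprod, ← hY0, range_eq_Ico,
    sum_eq_sum_Ico_succ_bot (by omega), Ico_add_one_right_eq_Icc]

lemma sum_weight_eq_one (α : ℕ → R) (hα0 : α 0 = 1) (n : ℕ) :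
    ∑ i ∈ range (n + 1), weight α i n = 1 := by
  simpa using (eq_sum_weight_smul α (fun _ => (1 : R)) (fun _ => 1) hα0 rfl
    (fun n => by simp) n).symm

end AveragedIteration

lemma Finset.sum_sum_mul_smul_sub {ι R M : Type*} [CommRing R] [AddCommGroup M] [Module R M]
    (s t : Finset ι) (p q : ι → R) (Y : ι → M) :
    ∑ i ∈ s, ∑ j ∈ t, (p i * q j) • (Y i - Y j) =
      (∑ j ∈ t, q j) • ∑ i ∈ s, p i • Y i - (∑ i ∈ s, p i) • ∑ j ∈ t, q j • Y j := by
  simp only [smul_sub, sum_sub_distrib, smul_sum, smul_smul, sum_mul, sum_smul]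
  rw [sum_comm (s := s) (t := t) (f := fun i j => (p i * q j) • Y j)]
  congr 1
  exact sum_congr rfl fun _ _ => sum_congr rfl fun _ _ => by rw [mul_comm]

open AveragedIteration in
theorem stmt3_general {X : Type*} [NormedAddCommGroup X] [NormedSpace ℝ X]
    (α : ℕ → ℝ) (x Y : ℕ → X)
    (hα0 : α 0 = 1)
    (hY0 : Y 0 = x 0)
    (hrec : ∀ n, x (n + 1) = (1 - α (n + 1)) • x n + α (n + 1) • Y (n + 1)) :
    ∀ m n, m ≤ n →
      x m - x n = ∑ i ∈ Finset.range (m + 1), ∑ j ∈ Finset.Icc (m + 1) n,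
        ((α i * ∏ k ∈ Finset.Icc (i + 1) m, (1 - α k))
          * (α j * ∏ k ∈ Finset.Icc (j + 1) n, (1 - α k))) • (Y i - Y j) := by
  intro m n hmn
  change _ = ∑ i ∈ range (m + 1), ∑ j ∈ Icc (m + 1) n, (weight α i m * weight α j n) • (Y i - Y j)
  rw [sum_sum_mul_smul_sub, ← one_sub_prod_eq_sum_weight α hmn, sum_weight_eq_one α hα0, one_smul,
    ← eq_sum_weight_smul α x Y hα0 hY0 hrec, eq_prod_smul_add_sum_weight_smul α x Y hrec hmn,
    sub_smul, one_smul]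
  abel

/-- For the averaged iteration `x (n+1) = (1-α (n+1)) • x n + α (n+1) • Y (n+1)`
(where `Y i` stands for `y_{i-1}`, so `Y 0 = y_{-1} = x 0`), with `α 0 = 1`, `α n ∈ [0,1]`
and `π i n = α i * ∏_{k=i+1}^n (1-α k)`, for all `0 ≤ m ≤ n`:
`x m - x n = ∑_{i=0}^m ∑_{j=m+1}^n π i m * π j n • (Y i - Y j)`. -/
theorem stmt3 {X : Type*} [NormedAddCommGroup X] [NormedSpace ℝ X]
    (α : ℕ → ℝ) (x Y : ℕ → X)
    (hα0 : α 0 = 1) (hα : ∀ n, α n ∈ Set.Icc (0:ℝ) 1)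
    (hY0 : Y 0 = x 0)
    (hrec : ∀ n, x (n + 1) = (1 - α (n + 1)) • x n + α (n + 1) • Y (n + 1)) :
    ∀ m n, m ≤ n →
      x m - x n = ∑ i ∈ Finset.range (m + 1), ∑ j ∈ Finset.Icc (m + 1) n,
        ((α i * ∏ k ∈ Finset.Icc (i + 1) m, (1 - α k))
          * (α j * ∏ k ∈ Finset.Icc (j + 1) n, (1 - α k))) • (Y i - Y j) :=
  stmt3_general α x Y hα0 hY0 hrec
end

section
/- Let $T: C \to C$ be nonexpansive on a closed convex subset $C$ of a Banach space, and let $(x_n)$ be generated by the inexact Krasnosel'skii-Mann iteration $x_{n+1} = (1-\alpha_{n+1})x_n + \alpha_{n+1}(Tx_n + e_{n+1})$ with all $x_n \in C$ and $\|Tx_n - x_0\| \leq \kappa$ for all $n$. Let $\epsilon_n \geq \|e_n\|$ with $\epsilon_0 = 0$, $\alpha_0 = 1$, and define $w_{m,n}$ for $-1 \leq m \leq n$ by $w_{-1,n} = \kappa$ and $w_{m,n} = \sum_{i=0}^m \sum_{j=m+1}^n \pi_i^m \pi_j^n (w_{i-1,j-1} + \epsilon_i + \epsilon_j)$ for $0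 \leq m \leq n$, where $\pi_i^n = \alpha_i \prod_{k=i+1}^n(1-\alpha_k)$. Then $\|x_m - x_n\| \leq w_{m,n}$ for all $0 \leq m \leq n$. -/
/-!
Unfolding the recursion writes `x_n = ∑_{i ≤ n} π_i^n y_i` as a convex combination of the inputs
`y_0 = x_0`, `y_i = T x_{i-1} + e_i`. Since the weights `π_j^n` with `j > m` together with
`∏_{k=m+1}^n (1 - α_k)` sum to one, and `x_n = ∏_{k=m+1}^n (1 - α_k) x_m + ∑_{j>m} π_j^n y_j`,
one gets `x_m - x_n = ∑_{i ≤ m < j ≤ n} π_i^m π_j^n (y_i - y_j)`. Each `‖y_i - y_j‖` is bounded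
by `w_{i-1,j-1} + ε_i + ε_j`: by `κ` through `‖T x_{j-1} - x_0‖ ≤ κ` when `i = 0`, and by
nonexpansiveness and strong induction on `n` otherwise.
-/

open Finset

theorem Finset.sum_range_add_sum_Icc {M : Type*} [AddCommMonoid M] (f : ℕ → M) {m n : ℕ}
    (h : m ≤ n) :
    ∑ i ∈ range (m + 1), f i + ∑ i ∈ Icc (m + 1) n, f i = ∑ i ∈ range (n + 1), f i := by
  rw [← Ico_add_one_right_eq_Icc, sum_range_add_sum_Ico f (by omega)]

section Weights

variable {R : Type*} [CommRing R] (α : ℕ → R)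

/-- The weight `π_i^n` of the `i`-th input in the `n`-th Krasnosel'skii–Mann iterate. -/
def kmWeight (i n : ℕ) : R := α i * ∏ k ∈ Icc (i + 1) n, (1 - α k)

theorem kmWeight_self (n : ℕ) : kmWeight α n n = α n := by
  simp [kmWeight]

theorem kmWeight_succ {i n : ℕ} (h : i ≤ n) :
    kmWeight α i (n + 1) = (1 - α (n + 1)) * kmWeight α i n := by
  rw [kmWeight, kmWeight, prod_Icc_succ_top (by omega)]
  ring

theorem kmWeight_eq_mul_prod {i m n : ℕ} (him : i ≤ m) (hmn : m ≤ n) :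
    kmWeight α i n = kmWeight α i m * ∏ k ∈ Icc (m + 1) n, (1 - α k) := by
  simp only [kmWeight, Icc_add_one_left_eq_Ioc, ← prod_Ioc_consecutive _ him hmn, mul_assoc]

theorem sum_kmWeight (hα0 : α 0 = 1) (n : ℕ) : ∑ i ∈ range (n + 1), kmWeight α i n = 1 := by
  induction n with
  | zero => simp [kmWeight, hα0]
  | succ n ih =>
    rw [sum_range_succ, kmWeight_self,
      sum_congr rfl fun i hi => kmWeight_succ α (Nat.lt_succ_iff.mp (mem_range.mp hi)),
      ← mul_sum, ih]
    ring

theorem prod_add_sum_kmWeight (hα0 : α 0 = 1) {m n : ℕ} (hmn : m ≤ n) :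
    ∏ k ∈ Icc (m + 1) n, (1 - α k) + ∑ j ∈ Icc (m + 1) n, kmWeight α j n = 1 := by
  have h := sum_kmWeight α hα0 n
  rwa [← sum_range_add_sum_Icc _ hmn,
    sum_congr rfl fun i hi => kmWeight_eq_mul_prod α (Nat.lt_succ_iff.mp (mem_range.mp hi)) hmn,
    ← sum_mul, sum_kmWeight α hα0, one_mul] at h

theorem kmWeight_nonneg {α : ℕ → ℝ} (hα : ∀ n, α n ∈ Set.Icc (0 : ℝ) 1) (i n : ℕ) :
    0 ≤ kmWeight α i n :=
  mul_nonneg (hα i).1 (prod_nonneg fun k _ => sub_nonneg.mpr (hα k).2)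

end Weights

section Iteration

variable {R X : Type*} [CommRing R] [AddCommGroup X] [Module R X] {α : ℕ → R} {x y : ℕ → X}

theorem eq_sum_kmWeight_smul (hα0 : α 0 = 1) (hy0 : y 0 = x 0)
    (hrec : ∀ n, x (n + 1) = (1 - α (n + 1)) • x n + α (n + 1) • y (n + 1)) (n : ℕ) :
    x n = ∑ i ∈ range (n + 1), kmWeight α i n • y i := by
  induction n with
  | zero => simp [kmWeight, hα0, hy0]
  | succ n ih =>
    rw [sum_range_succ, kmWeight_self,
      sum_congr rfl fun i hi => by
        rw [kmWeight_succ α (Nat.lt_succ_iff.mp (mem_range.mp hi)), mul_smul],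
      ← smul_sum, ← ih, hrec]

theorem eq_prod_smul_add_sum_kmWeight_smul (hα0 : α 0 = 1) (hy0 : y 0 = x 0)
    (hrec : ∀ n, x (n + 1) = (1 - α (n + 1)) • x n + α (n + 1) • y (n + 1))
    {m n : ℕ} (hmn : m ≤ n) :
    x n = (∏ k ∈ Icc (m + 1) n, (1 - α k)) • x m + ∑ j ∈ Icc (m + 1) n, kmWeight α j n • y j := by
  rw [eq_sum_kmWeight_smul hα0 hy0 hrec n, ← sum_range_add_sum_Icc _ hmn,
    eq_sum_kmWeight_smul hα0 hy0 hrec m, smul_sum]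
  congr 1
  refine sum_congr rfl fun i hi => ?_
  rw [kmWeight_eq_mul_prod α (Nat.lt_succ_iff.mp (mem_range.mp hi)) hmn, mul_comm, mul_smul]

theorem sub_eq_sum_sum_kmWeight_smul (hα0 : α 0 = 1) (hy0 : y 0 = x 0)
    (hrec : ∀ n, x (n + 1) = (1 - α (n + 1)) • x n + α (n + 1) • y (n + 1))
    {m n : ℕ} (hmn : m ≤ n) :
    x m - x n = ∑ i ∈ range (m + 1), ∑ j ∈ Icc (m + 1) n,
      (kmWeight α i m * kmWeight α j n) • (y i - y j) := by
  have hfirst : ∑ i ∈ range (m + 1), ∑ j ∈ Icc (m + 1) n, (kmWeight α i m * kmWeight α j n) • y i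
      = (∑ j ∈ Icc (m + 1) n, kmWeight α j n) • x m := by
    simp_rw [mul_comm (kmWeight α _ m), mul_smul, ← sum_smul, ← smul_sum,
      ← eq_sum_kmWeight_smul hα0 hy0 hrec m]
  have hsecond : ∑ i ∈ range (m + 1), ∑ j ∈ Icc (m + 1) n, (kmWeight α i m * kmWeight α j n) • y j
      = ∑ j ∈ Icc (m + 1) n, kmWeight α j n • y j := by
    rw [sum_comm]
    simp_rw [← sum_smul, ← sum_mul, sum_kmWeight α hα0, one_mul]
  simp only [smul_sub, sum_sub_distrib, hfirst, hsecond]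
  rw [eq_prod_smul_add_sum_kmWeight_smul hα0 hy0 hrec hmn,
    eq_sub_of_add_eq' (prod_add_sum_kmWeight α hα0 hmn), sub_smul, one_smul]
  abel

end Iteration

theorem norm_sub_le_sum_sum_kmWeight {X : Type*} [NormedAddCommGroup X] [NormedSpace ℝ X]
    {α : ℕ → ℝ} (hα0 : α 0 = 1) (hα : ∀ n, α n ∈ Set.Icc (0 : ℝ) 1) {x y : ℕ → X}
    (hy0 : y 0 = x 0)
    (hrec : ∀ n, x (n + 1) = (1 - α (n + 1)) • x n + α (n + 1) • y (n + 1))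
    {b : ℕ → ℕ → ℝ} {m n : ℕ} (hmn : m ≤ n)
    (hb : ∀ i ∈ range (m + 1), ∀ j ∈ Icc (m + 1) n, ‖y i - y j‖ ≤ b i j) :
    ‖x m - x n‖ ≤ ∑ i ∈ range (m + 1), ∑ j ∈ Icc (m + 1) n,
      kmWeight α i m * kmWeight α j n * b i j := by
  rw [sub_eq_sum_sum_kmWeight_smul hα0 hy0 hrec hmn]
  refine (norm_sum_le _ _).trans <| sum_le_sum fun i hi => (norm_sum_le _ _).trans <|
    sum_le_sum fun j hj => ?_
  have hπ := mul_nonneg (kmWeight_nonneg hα i m) (kmWeight_nonneg hα j n)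
  rw [norm_smul, Real.norm_of_nonneg hπ]
  exact mul_le_mul_of_nonneg_left (hb i hi j hj) hπ

/-- The input `y_i` fed to the iteration at step `i`; `y_0 = x_0` makes `x_0 = π_0^0 y_0`. -/
def kmInput {X : Type*} [AddCommGroup X] (T : X → X) (e x : ℕ → X) : ℕ → X
  | 0 => x 0
  | i + 1 => T (x i) + e (i + 1)

theorem stmt4_general {X : Type*} [NormedAddCommGroup X] [NormedSpace ℝ X]
    (C : Set X)
    (T : X → X)
    (hT : ∀ x ∈ C, ∀ y ∈ C, ‖T x - T y‖ ≤ ‖x - y‖)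
    (α : ℕ → ℝ) (hα0 : α 0 = 1) (hα : ∀ n, α n ∈ Set.Icc (0:ℝ) 1)
    (e : ℕ → X)
    (x : ℕ → X) (hxC : ∀ n, x n ∈ C)
    (hrec : ∀ n, x (n + 1)
      = (1 - α (n + 1)) • x n + α (n + 1) • (T (x n) + e (n + 1)))
    (κ : ℝ) (hbound : ∀ n, ‖T (x n) - x 0‖ ≤ κ)
    (ε : ℕ → ℝ) (hε : ∀ n, ‖e n‖ ≤ ε n) (hε0 : ε 0 = 0)
    (w : ℤ → ℤ → ℝ)
    (hwκ : ∀ n : ℤ, w (-1) n = κ)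
    (hwrec : ∀ m n : ℕ, m ≤ n → w m n
      = ∑ i ∈ Finset.range (m + 1), ∑ j ∈ Finset.Icc (m + 1) n,
          (α i * ∏ k ∈ Finset.Icc (i + 1) m, (1 - α k))
            * (α j * ∏ k ∈ Finset.Icc (j + 1) n, (1 - α k))
            * (w ((i : ℤ) - 1) ((j : ℤ) - 1) + ε i + ε j)) :
    ∀ m n : ℕ, m ≤ n → ‖x m - x n‖ ≤ w m n := by
  intro m n
  induction n using Nat.strong_induction_on generalizing m with
  | _ n ih =>
  intro hmn
  rw [hwrec m n hmn]
  refine norm_sub_le_sum_sum_kmWeight (x := x) (y := kmInput T e x) hα0 hα rfl hrec hmn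
    fun i hi j hj => ?_
  obtain ⟨j, rfl⟩ : ∃ j', j = j' + 1 := ⟨j - 1, by grind⟩
  have hej := hε (j + 1)
  rcases i with _ | i <;> simp only [kmInput, Nat.cast_add, Nat.cast_one, add_sub_cancel_right]
  · have hsplit : x 0 - (T (x j) + e (j + 1)) = -((T (x j) - x 0) + e (j + 1)) := by abel
    rw [Nat.cast_zero, zero_sub, hwκ, hε0, hsplit, norm_neg]
    linarith [norm_add_le (T (x j) - x 0) (e (j + 1)), hbound j]
  · have hsplit : T (x i) + e (i + 1) - (T (x j) + e (j + 1))
        = (T (x i) - T (x j)) + e (i + 1) + -e (j + 1) := by abel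
    have hij : i ≤ j := by grind
    have hjn : j < n := by grind
    rw [hsplit]
    linarith [norm_add₃_le (a := T (x i) - T (x j)) (b := e (i + 1)) (c := -e (j + 1)),
      norm_neg (e (j + 1)), hT _ (hxC i) _ (hxC j), ih j hjn i hij, hε (i + 1)]

/-- recursive bound `‖x m - x n‖ ≤ w m n` for the inexact KM iteration.
Here `w : ℤ → ℤ → ℝ` encodes `w_{m,n}` for `-1 ≤ m ≤ n`, with boundary value
`w (-1) n = κ` and the recursion
`w m n = ∑_{i=0}^m ∑_{j=m+1}^n π i m * π j n * (w (i-1) (j-1) + ε i + ε j)`,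
where `π i n = α i * ∏_{k=i+1}^n (1-α k)`. -/
theorem stmt4 {X : Type*} [NormedAddCommGroup X] [NormedSpace ℝ X] [CompleteSpace X]
    (C : Set X) (hC : IsClosed C) (hconv : Convex ℝ C)
    (T : X → X) (hTmaps : ∀ x ∈ C, T x ∈ C)
    (hT : ∀ x ∈ C, ∀ y ∈ C, ‖T x - T y‖ ≤ ‖x - y‖)
    (α : ℕ → ℝ) (hα0 : α 0 = 1) (hα : ∀ n, α n ∈ Set.Icc (0:ℝ) 1)
    (e : ℕ → X) (he0 : e 0 = 0)
    (x : ℕ → X) (hxC : ∀ n, x n ∈ C)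
    (hrec : ∀ n, x (n + 1)
      = (1 - α (n + 1)) • x n + α (n + 1) • (T (x n) + e (n + 1)))
    (κ : ℝ) (hκ : 0 ≤ κ) (hbound : ∀ n, ‖T (x n) - x 0‖ ≤ κ)
    (ε : ℕ → ℝ) (hε : ∀ n, ‖e n‖ ≤ ε n) (hε0 : ε 0 = 0)
    (w : ℤ → ℤ → ℝ)
    (hwκ : ∀ n : ℤ, w (-1) n = κ)
    (hwrec : ∀ m n : ℕ, m ≤ n → w m n
      = ∑ i ∈ Finset.range (m + 1), ∑ j ∈ Finset.Icc (m + 1) n,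
          (α i * ∏ k ∈ Finset.Icc (i + 1) m, (1 - α k))
            * (α j * ∏ k ∈ Finset.Icc (j + 1) n, (1 - α k))
            * (w ((i : ℤ) - 1) ((j : ℤ) - 1) + ε i + ε j)) :
    ∀ m n : ℕ, m ≤ n → ‖x m - x n‖ ≤ w m n :=
  stmt4_general C T hT α hα0 hα e x hxC hrec κ hbound ε hε hε0 w hwκ hwrec
end

section
/- Under the hypotheses of the main bound (inexact KM iteration with $x_n \in C$, $\|Tx_n - x_0\| \leq \kappa$), if $\tau_n = \sum_{k=1}^n \alpha_k(1-\alpha_k) \to \infty$, $\|e_n\| \to 0$, and $\sum_{k \geq 1} \alpha_k \|e_k\| < \infty$, then $\|x_n - Tx_n\| \to 0$. -/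
/-!
For the exact iteration `y (n+1) = (1 - b (n+1)) • y n + b (n+1) • T (y n)` with
`‖T (y n) - y 0‖ ≤ D`, a double induction gives `‖y n - y m‖ ≤ D * K₀ n m` and
`‖T (y n) - y m‖ ≤ D * K₁ n m`, where `K₀`, `K₁` obey the two-index recursion that the triangle
inequality and nonexpansiveness give for these distances. The recursion is solved by
`Kₜ n m = E sign (S n - S' m + t)`, with `S`, `S'` independent sums of Bernoulli trials of success
probabilities `b k`. On the diagonal `K₁ n n = P (S n = S' n) + P (S n = S' n - 1)`, and by
Fourier inversion these probabilities are integrals of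
`cos (d θ) * ∏ k ≤ n, (1 - 2 b k (1 - b k) (1 - cos θ))`, which tend to `0` by dominated convergence
once `∑ b k (1 - b k) = ∞`. Errors are handled by restarting: from a late index `M`, the inexact
iterates stay within `∑_{k > M} α k ‖e k‖` of the exact iteration started at `x M`.
-/

open Finset Filter Topology

namespace KrasnoselskiiMann

section Kernel

variable (b : ℕ → ℝ)

/-- `expect b n g = E g (S n)`, where `S n` is the number of successes among independent
Bernoulli trials `1, …, n` with success probabilities `b 1, …, b n`. -/
def expect : ℕ → (ℕ → ℝ) → ℝ
  | 0, g => g 0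
  | n + 1, g => (1 - b (n + 1)) * expect n g + b (n + 1) * expect n (fun j => g (j + 1))

variable {b}

theorem expect_add (n : ℕ) (g h : ℕ → ℝ) :
    expect b n (fun j => g j + h j) = expect b n g + expect b n h := by
  induction n generalizing g h with
  | zero => rfl
  | succ n ih => simp only [expect, ih]; ring

theorem expect_const_mul (n : ℕ) (c : ℝ) (g : ℕ → ℝ) :
    expect b n (fun j => c * g j) = c * expect b n g := by
  induction n generalizing g with
  | zero => rfl
  | succ n ih => simp only [expect, ih]; ring

theorem expect_const (n : ℕ) (c : ℝ) : expect b n (fun _ => c) = c := by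
  induction n with
  | zero => rfl
  | succ n ih => simp only [expect, ih]; ring

theorem expect_comm (n m : ℕ) (h : ℕ → ℕ → ℝ) :
    expect b n (fun j => expect b m (fun i => h j i))
      = expect b m (fun i => expect b n (fun j => h j i)) := by
  induction n generalizing h with
  | zero => rfl
  | succ n ih => simp only [expect, ih, expect_add, expect_const_mul]

variable (b)

/-- `expectDiff b n m f = E f (S n - S' m)` for independent `S`, `S'` distributed as in `expect`. -/
def expectDiff (n m : ℕ) (f : ℤ → ℝ) : ℝ :=
  expect b n (fun j => expect b m (fun i => f (j - i)))

variable {b}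

theorem expectDiff_add (n m : ℕ) (f g : ℤ → ℝ) :
    expectDiff b n m (fun k => f k + g k) = expectDiff b n m f + expectDiff b n m g := by
  simp only [expectDiff, expect_add]

theorem expectDiff_const_mul (n m : ℕ) (c : ℝ) (f : ℤ → ℝ) :
    expectDiff b n m (fun k => c * f k) = c * expectDiff b n m f := by
  simp only [expectDiff, expect_const_mul]

theorem expectDiff_succ_left (n m : ℕ) (f : ℤ → ℝ) :
    expectDiff b (n + 1) m f
      = (1 - b (n + 1)) * expectDiff b n m f
        + b (n + 1) * expectDiff b n m (fun k => f (k + 1)) := by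
  simp only [expectDiff, expect, Nat.cast_add, Nat.cast_one, add_sub_right_comm]

theorem expectDiff_succ_right (n m : ℕ) (f : ℤ → ℝ) :
    expectDiff b n (m + 1) f
      = (1 - b (m + 1)) * expectDiff b n m f
        + b (m + 1) * expectDiff b n m (fun k => f (k - 1)) := by
  simp only [expectDiff, expect, expect_add, expect_const_mul, Nat.cast_add, Nat.cast_one,
    sub_add_eq_sub_sub]

theorem expectDiff_self_comp_neg (n : ℕ) (f : ℤ → ℝ) :
    expectDiff b n n (fun k => f (-k)) = expectDiff b n n f := by
  rw [expectDiff, expect_comm]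
  simp only [neg_sub]
  rfl

theorem expectDiff_succ_succ (n : ℕ) (f : ℤ → ℝ) :
    expectDiff b (n + 1) (n + 1) f
      = (1 - 2 * (b (n + 1) * (1 - b (n + 1)))) * expectDiff b n n f
        + b (n + 1) * (1 - b (n + 1))
          * (expectDiff b n n (fun k => f (k + 1)) + expectDiff b n n (fun k => f (k - 1))) := by
  simp only [expectDiff_succ_left, expectDiff_succ_right, sub_add_cancel]
  ring

variable (b)

def signKernel (t : ℤ) (n m : ℕ) : ℝ := expectDiff b n m (fun k => ((k + t).sign : ℝ))

def diffProb (n : ℕ) (d : ℤ) : ℝ := expectDiff b n n (fun k => if k = d then 1 else 0)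

variable {b}

theorem signKernel_succ_left (t : ℤ) (n m : ℕ) :
    signKernel b t (n + 1) m
      = (1 - b (n + 1)) * signKernel b t n m + b (n + 1) * signKernel b (t + 1) n m := by
  simp only [signKernel, expectDiff_succ_left, add_assoc, add_comm (1 : ℤ)]

theorem signKernel_succ_right (t : ℤ) (n m : ℕ) :
    signKernel b t n (m + 1)
      = (1 - b (m + 1)) * signKernel b t n m + b (m + 1) * signKernel b (t - 1) n m := by
  simp only [signKernel, expectDiff_succ_right, sub_add_eq_add_sub, add_sub_assoc]

theorem signKernel_zero_self (n : ℕ) : signKernel b 0 n n = 0 := by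
  have h := expectDiff_self_comp_neg (b := b) n (fun k => ((k + 0).sign : ℝ))
  have hneg : ∀ k : ℤ, (((-k) + 0).sign : ℝ) = -1 * ((k + 0).sign : ℝ) := by
    intro k; simp [Int.sign_neg]
  simp only [hneg, expectDiff_const_mul] at h
  rw [signKernel]
  linarith

theorem signKernel_one_zero_right (n : ℕ) : signKernel b 1 n 0 = 1 := by
  have hpos : ∀ j : ℕ, (((j : ℤ) - (0 : ℕ) + 1).sign : ℝ) = 1 := fun j => by
    rw [Int.sign_eq_one_of_pos (by omega), Int.cast_one]
  simp only [signKernel, expectDiff, expect, hpos, expect_const]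

theorem intCast_sign_add_one (k : ℤ) :
    (((k + 1).sign : ℤ) : ℝ) = k.sign + ((if k = 0 then 1 else 0) + (if k = -1 then 1 else 0)) := by
  rcases lt_trichotomy k 0 with hk | rfl | hk
  · rcases (Int.le_sub_one_of_lt hk).eq_or_lt with rfl | hk'
    · norm_num
    · rw [Int.sign_eq_neg_one_of_neg (by omega), Int.sign_eq_neg_one_of_neg (by omega),
        if_neg (by omega), if_neg (by omega)]
      norm_num
  · norm_num
  · rw [Int.sign_eq_one_of_pos (by omega), Int.sign_eq_one_of_pos (by omega),
      if_neg (by omega), if_neg (by omega)]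
    norm_num

theorem signKernel_one_self (n : ℕ) :
    signKernel b 1 n n = diffProb b n 0 + diffProb b n (-1) := by
  have h : ∀ k : ℤ, (((k + 1).sign : ℤ) : ℝ)
      = ((k + 0).sign : ℝ) + ((if k = 0 then 1 else 0) + (if k = -1 then 1 else 0)) := fun k => by
    rw [add_zero, intCast_sign_add_one]
  simp only [signKernel, h, expectDiff_add]
  rw [← signKernel, signKernel_zero_self, zero_add, diffProb, diffProb]

theorem diffProb_zero (d : ℤ) : diffProb b 0 d = if d = 0 then 1 else 0 := by
  simp [diffProb, expectDiff, expect, eq_comm]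

theorem diffProb_succ (n : ℕ) (d : ℤ) :
    diffProb b (n + 1) d
      = (1 - 2 * (b (n + 1) * (1 - b (n + 1)))) * diffProb b n d
        + b (n + 1) * (1 - b (n + 1)) * (diffProb b n (d - 1) + diffProb b n (d + 1)) := by
  simp only [diffProb, expectDiff_succ_succ, ← eq_sub_iff_add_eq, sub_eq_iff_eq_add]

end Kernel

section Fourier

open Real MeasureTheory

variable (b : ℕ → ℝ)

def tau (n : ℕ) : ℝ := ∑ k ∈ Icc 1 n, b k * (1 - b k)

/-- The characteristic function `θ ↦ E cos (θ (S n - S' n))`, in the notation of `expectDiff`. -/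
noncomputable def diffCharFun (n : ℕ) (θ : ℝ) : ℝ :=
  ∏ k ∈ Icc 1 n, (1 - 2 * (b k * (1 - b k)) * (1 - cos θ))

variable {b}

theorem tau_succ (n : ℕ) : tau b (n + 1) = tau b n + b (n + 1) * (1 - b (n + 1)) :=
  sum_Icc_succ_top (by omega) _

theorem tau_nonneg (hb : ∀ k, b k ∈ Set.Icc (0 : ℝ) 1) (n : ℕ) : 0 ≤ tau b n :=
  sum_nonneg fun k _ => mul_nonneg (hb k).1 (sub_nonneg.2 (hb k).2)

theorem tau_comp_add_left (M n : ℕ) : tau (fun k => b (M + k)) n = tau b (M + n) - tau b M := by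
  induction n with
  | zero => simp [tau]
  | succ n ih => rw [tau_succ, ih, ← add_assoc, tau_succ]; ring

theorem tendsto_tau_comp_add_left (hτ : Tendsto (tau b) atTop atTop) (M : ℕ) :
    Tendsto (tau fun k => b (M + k)) atTop atTop := by
  refine (tendsto_atTop_add_const_right _ (-tau b M)
    (hτ.comp ((tendsto_add_atTop_nat M).congr fun k => add_comm k M))).congr fun n => ?_
  rw [tau_comp_add_left, sub_eq_add_neg, Function.comp_apply]

theorem continuous_diffCharFun (n : ℕ) : Continuous (diffCharFun b n) := by
  unfold diffCharFun; fun_prop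

theorem diffCharFun_succ (n : ℕ) (θ : ℝ) :
    diffCharFun b (n + 1) θ
      = diffCharFun b n θ * (1 - 2 * (b (n + 1) * (1 - b (n + 1))) * (1 - cos θ)) :=
  prod_Icc_succ_top (by omega) _

theorem two_mul_variance_mul_one_sub_cos_le_one {p : ℝ} (hp : p ∈ Set.Icc (0 : ℝ) 1) (θ : ℝ) :
    2 * (p * (1 - p)) * (1 - cos θ) ≤ 1 := by
  obtain ⟨hp0, hp1⟩ := hp
  have hv : p * (1 - p) ≤ 1 / 4 := by nlinarith [sq_nonneg (p - 1 / 2)]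
  nlinarith [mul_nonneg hp0 (sub_nonneg.2 hp1), neg_one_le_cos θ, cos_le_one θ]

theorem diffCharFun_nonneg (hb : ∀ k, b k ∈ Set.Icc (0 : ℝ) 1) (n : ℕ) (θ : ℝ) :
    0 ≤ diffCharFun b n θ :=
  prod_nonneg fun k _ => sub_nonneg.2 (two_mul_variance_mul_one_sub_cos_le_one (hb k) θ)

theorem diffCharFun_le_exp (hb : ∀ k, b k ∈ Set.Icc (0 : ℝ) 1) (n : ℕ) (θ : ℝ) :
    diffCharFun b n θ ≤ exp (-(2 * (1 - cos θ) * tau b n)) := by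
  calc diffCharFun b n θ ≤ ∏ k ∈ Icc 1 n, exp (-(2 * (b k * (1 - b k)) * (1 - cos θ))) :=
        prod_le_prod (fun k _ => sub_nonneg.2 (two_mul_variance_mul_one_sub_cos_le_one (hb k) θ))
          fun k _ => one_sub_le_exp_neg _
    _ = exp (-(2 * (1 - cos θ) * tau b n)) := by
        rw [← exp_sum, tau, mul_sum, ← sum_neg_distrib]
        congr 1; refine sum_congr rfl fun k _ => ?_; ring

theorem diffCharFun_le_one (hb : ∀ k, b k ∈ Set.Icc (0 : ℝ) 1) (n : ℕ) (θ : ℝ) :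
    diffCharFun b n θ ≤ 1 :=
  (diffCharFun_le_exp hb n θ).trans <| exp_le_one_iff.2 <| neg_nonpos.2 <|
    mul_nonneg (mul_nonneg zero_le_two (sub_nonneg.2 (cos_le_one θ))) (tau_nonneg hb n)

theorem integral_cos_int_mul (d : ℤ) :
    ∫ θ in (-π)..π, cos (d * θ) = if d = 0 then 2 * π else 0 := by
  split_ifs with hd
  · simp [hd]; ring
  · have hd' : (d : ℝ) ≠ 0 := Int.cast_ne_zero.2 hd
    rw [intervalIntegral.integral_comp_mul_left (fun θ => cos θ) hd', integral_cos, mul_neg,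
      sin_neg, sin_int_mul_pi]
    simp

theorem integral_cos_mul_diffCharFun_succ (n : ℕ) (d : ℤ) :
    ∫ θ in (-π)..π, cos (d * θ) * diffCharFun b (n + 1) θ
      = (1 - 2 * (b (n + 1) * (1 - b (n + 1)))) * (∫ θ in (-π)..π, cos (d * θ) * diffCharFun b n θ)
        + b (n + 1) * (1 - b (n + 1)) * ((∫ θ in (-π)..π, cos ((d - 1 : ℤ) * θ) * diffCharFun b n θ)
          + ∫ θ in (-π)..π, cos ((d + 1 : ℤ) * θ) * diffCharFun b n θ) := by
  have hint : ∀ e : ℤ,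
      IntervalIntegrable (fun θ => cos (e * θ) * diffCharFun b n θ) volume (-π) π :=
    fun e => (by fun_prop : Continuous fun θ => cos (e * θ)).mul (continuous_diffCharFun n)
      |>.intervalIntegrable _ _
  have hpt : ∀ θ : ℝ, cos (d * θ) * diffCharFun b (n + 1) θ
      = (1 - 2 * (b (n + 1) * (1 - b (n + 1)))) * (cos (d * θ) * diffCharFun b n θ)
        + b (n + 1) * (1 - b (n + 1)) * (cos ((d - 1 : ℤ) * θ) * diffCharFun b n θ
          + cos ((d + 1 : ℤ) * θ) * diffCharFun b n θ) := fun θ => by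
    rw [diffCharFun_succ, show ((d - 1 : ℤ) : ℝ) * θ = d * θ - θ by push_cast; ring,
      show ((d + 1 : ℤ) : ℝ) * θ = d * θ + θ by push_cast; ring, cos_sub, cos_add]
    ring
  simp only [hpt]
  rw [intervalIntegral.integral_add ((hint _).const_mul _) (((hint _).add (hint _)).const_mul _),
    intervalIntegral.integral_const_mul, intervalIntegral.integral_const_mul,
    intervalIntegral.integral_add (hint _) (hint _)]

theorem two_pi_mul_diffProb (n : ℕ) (d : ℤ) :
    2 * π * diffProb b n d = ∫ θ in (-π)..π, cos (d * θ) * diffCharFun b n θ := by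
  induction n generalizing d with
  | zero => simp [diffProb_zero, diffCharFun, integral_cos_int_mul]
  | succ n ih =>
    rw [diffProb_succ, integral_cos_mul_diffCharFun_succ, ← ih, ← ih, ← ih]
    ring

theorem tendsto_diffCharFun (hb : ∀ k, b k ∈ Set.Icc (0 : ℝ) 1)
    (hτ : Tendsto (tau b) atTop atTop) {θ : ℝ} (hθ : cos θ < 1) :
    Tendsto (fun n => diffCharFun b n θ) atTop (𝓝 0) := by
  have hexp : Tendsto (fun n => exp (-(2 * (1 - cos θ) * tau b n))) atTop (𝓝 0) :=
    tendsto_exp_neg_atTop_nhds_zero.comp (hτ.const_mul_atTop (by linarith))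
  exact squeeze_zero (diffCharFun_nonneg hb · θ) (diffCharFun_le_exp hb · θ) hexp

theorem norm_cos_mul_diffCharFun_le (hb : ∀ k, b k ∈ Set.Icc (0 : ℝ) 1) (n : ℕ) (a θ : ℝ) :
    ‖cos (a * θ) * diffCharFun b n θ‖ ≤ diffCharFun b n θ := by
  rw [norm_mul, Real.norm_of_nonneg (diffCharFun_nonneg hb n θ)]
  exact mul_le_of_le_one_left (diffCharFun_nonneg hb n θ) (abs_cos_le_one _)

theorem tendsto_diffProb (hb : ∀ k, b k ∈ Set.Icc (0 : ℝ) 1)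
    (hτ : Tendsto (tau b) atTop atTop) (d : ℤ) :
    Tendsto (fun n => diffProb b n d) atTop (𝓝 0) := by
  have hint : Tendsto (fun n => ∫ θ in (-π)..π, cos (d * θ) * diffCharFun b n θ) atTop
      (𝓝 (∫ _ in (-π)..π, (0 : ℝ))) := by
    refine intervalIntegral.tendsto_integral_filter_of_dominated_convergence (fun _ => 1)
      (Eventually.of_forall fun n => ?_) (Eventually.of_forall fun n => ?_)
      intervalIntegrable_const ?_
    · exact ((by fun_prop : Continuous fun θ => cos (d * θ)).mul
        (continuous_diffCharFun n)).aestronglyMeasurable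
    · exact Eventually.of_forall fun θ _ =>
        (norm_cos_mul_diffCharFun_le hb n d θ).trans (diffCharFun_le_one hb n θ)
    · filter_upwards [Measure.ae_ne volume 0] with θ hθ0 hθ
      rw [Set.uIoc_of_le (by linarith [pi_pos])] at hθ
      have hcos : cos θ < 1 := (cos_le_one θ).lt_of_ne fun h =>
        hθ0 ((cos_eq_one_iff_of_lt_of_lt (by linarith [hθ.1, pi_pos])
          (by linarith [hθ.2, pi_pos])).1 h)
      exact squeeze_zero_norm (norm_cos_mul_diffCharFun_le hb · d θ)
        (tendsto_diffCharFun hb hτ hcos)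
  rw [intervalIntegral.integral_zero] at hint
  simpa only [← two_pi_mul_diffProb, mul_zero, inv_mul_cancel_left₀ two_pi_pos.ne'] using
    hint.const_mul (2 * π)⁻¹

theorem tendsto_signKernel_one_self (hb : ∀ k, b k ∈ Set.Icc (0 : ℝ) 1)
    (hτ : Tendsto (tau b) atTop atTop) :
    Tendsto (fun n => signKernel b 1 n n) atTop (𝓝 0) := by
  simpa only [signKernel_one_self, add_zero] using
    (tendsto_diffProb hb hτ 0).add (tendsto_diffProb hb hτ (-1))

end Fourier

section Iteration

variable {X : Type*} [NormedAddCommGroup X]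

theorem norm_sub_apply_le {C : Set X} {T : X → X}
    (hT : ∀ x ∈ C, ∀ y ∈ C, ‖T x - T y‖ ≤ ‖x - y‖) {u v : X}
    (hu : u ∈ C) (hv : v ∈ C) : ‖u - T u‖ ≤ 2 * ‖u - v‖ + ‖T v - v‖ := by
  calc ‖u - T u‖ = ‖(u - v) - (T v - v) + (T v - T u)‖ := by congr 1; abel
    _ ≤ ‖u - v‖ + ‖T v - v‖ + ‖T v - T u‖ := norm_add_le_of_le (norm_sub_le _ _) le_rfl
    _ ≤ ‖u - v‖ + ‖T v - v‖ + ‖u - v‖ := by rw [norm_sub_rev u v]; gcongr; exact hT _ hv _ hu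
    _ = 2 * ‖u - v‖ + ‖T v - v‖ := by ring

variable [NormedSpace ℝ X]

theorem norm_one_sub_smul_add_smul_le {a A B : ℝ} (ha : a ∈ Set.Icc (0 : ℝ) 1) {u v : X}
    (hu : ‖u‖ ≤ A) (hv : ‖v‖ ≤ B) : ‖(1 - a) • u + a • v‖ ≤ (1 - a) * A + a * B := by
  obtain ⟨ha0, ha1⟩ := ha
  calc ‖(1 - a) • u + a • v‖ ≤ ‖(1 - a) • u‖ + ‖a • v‖ := norm_add_le _ _
    _ = (1 - a) * ‖u‖ + a * ‖v‖ := by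
        rw [norm_smul, norm_smul, Real.norm_of_nonneg (sub_nonneg.2 ha1), Real.norm_of_nonneg ha0]
    _ ≤ (1 - a) * A + a * B := by gcongr

noncomputable def kmSeq (T : X → X) (b : ℕ → ℝ) (x₀ : X) : ℕ → X
  | 0 => x₀
  | n + 1 => (1 - b (n + 1)) • kmSeq T b x₀ n + b (n + 1) • T (kmSeq T b x₀ n)

variable {C : Set X} {T : X → X} {b : ℕ → ℝ} {x₀ : X}

theorem kmSeq_mem (hC : Convex ℝ C) (hTC : ∀ x ∈ C, T x ∈ C) (hb : ∀ k, b k ∈ Set.Icc (0 : ℝ) 1)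
    (hx₀ : x₀ ∈ C) (n : ℕ) : kmSeq T b x₀ n ∈ C := by
  induction n with
  | zero => exact hx₀
  | succ n ih => exact hC ih (hTC _ ih) (sub_nonneg.2 (hb _).2) (hb _).1 (sub_add_cancel 1 _)

section Majorization

variable {D : ℝ}

theorem norm_apply_kmSeq_sub_le (hT : ∀ x ∈ C, ∀ y ∈ C, ‖T x - T y‖ ≤ ‖x - y‖)
    (hb : ∀ k, b k ∈ Set.Icc (0 : ℝ) 1) (hyC : ∀ n, kmSeq T b x₀ n ∈ C)
    (hD : ∀ n, ‖T (kmSeq T b x₀ n) - x₀‖ ≤ D) {n : ℕ}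
    (hdist : ∀ m ≤ n, ‖kmSeq T b x₀ n - kmSeq T b x₀ m‖ ≤ D * signKernel b 0 n m) :
    ∀ m ≤ n, ‖T (kmSeq T b x₀ n) - kmSeq T b x₀ m‖ ≤ D * signKernel b 1 n m := by
  intro m
  induction m with
  | zero => intro _; simpa [signKernel_one_zero_right, kmSeq] using hD n
  | succ m ih =>
    intro hm
    have hsplit : T (kmSeq T b x₀ n) - kmSeq T b x₀ (m + 1)
        = (1 - b (m + 1)) • (T (kmSeq T b x₀ n) - kmSeq T b x₀ m)
          + b (m + 1) • (T (kmSeq T b x₀ n) - T (kmSeq T b x₀ m)) := by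
      rw [kmSeq]; module
    rw [hsplit, signKernel_succ_right, sub_self]
    calc _ ≤ (1 - b (m + 1)) * (D * signKernel b 1 n m) + b (m + 1) * (D * signKernel b 0 n m) :=
          norm_one_sub_smul_add_smul_le (hb _) (ih (by omega))
            ((hT _ (hyC n) _ (hyC m)).trans (hdist m (by omega)))
      _ = _ := by ring

theorem norm_kmSeq_sub_le (hT : ∀ x ∈ C, ∀ y ∈ C, ‖T x - T y‖ ≤ ‖x - y‖)
    (hb : ∀ k, b k ∈ Set.Icc (0 : ℝ) 1) (hyC : ∀ n, kmSeq T b x₀ n ∈ C)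
    (hD : ∀ n, ‖T (kmSeq T b x₀ n) - x₀‖ ≤ D) (n : ℕ) :
    ∀ m ≤ n, ‖kmSeq T b x₀ n - kmSeq T b x₀ m‖ ≤ D * signKernel b 0 n m := by
  induction n with
  | zero =>
    intro m hm
    obtain rfl : m = 0 := by omega
    simp [signKernel_zero_self]
  | succ n ih =>
    intro m hm
    rcases hm.eq_or_lt with rfl | hm
    · simp [signKernel_zero_self]
    have hsplit : kmSeq T b x₀ (n + 1) - kmSeq T b x₀ m
        = (1 - b (n + 1)) • (kmSeq T b x₀ n - kmSeq T b x₀ m)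
          + b (n + 1) • (T (kmSeq T b x₀ n) - kmSeq T b x₀ m) := by
      rw [kmSeq]; module
    rw [hsplit, signKernel_succ_left, zero_add]
    calc _ ≤ (1 - b (n + 1)) * (D * signKernel b 0 n m) + b (n + 1) * (D * signKernel b 1 n m) :=
          norm_one_sub_smul_add_smul_le (hb _) (ih m (by omega))
            (norm_apply_kmSeq_sub_le hT hb hyC hD ih m (by omega))
      _ = _ := by ring

theorem norm_apply_kmSeq_sub_kmSeq_le (hT : ∀ x ∈ C, ∀ y ∈ C, ‖T x - T y‖ ≤ ‖x - y‖)
    (hb : ∀ k, b k ∈ Set.Icc (0 : ℝ) 1) (hyC : ∀ n, kmSeq T b x₀ n ∈ C)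
    (hD : ∀ n, ‖T (kmSeq T b x₀ n) - x₀‖ ≤ D) (n : ℕ) :
    ‖T (kmSeq T b x₀ n) - kmSeq T b x₀ n‖ ≤ D * signKernel b 1 n n :=
  norm_apply_kmSeq_sub_le hT hb hyC hD (norm_kmSeq_sub_le hT hb hyC hD n) n le_rfl

end Majorization

theorem norm_sub_kmSeq_le (hT : ∀ x ∈ C, ∀ y ∈ C, ‖T x - T y‖ ≤ ‖x - y‖)
    (hb : ∀ k, b k ∈ Set.Icc (0 : ℝ) 1) {x : ℕ → X} {e : ℕ → X} (hxC : ∀ n, x n ∈ C)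
    (hyC : ∀ n, kmSeq T b (x 0) n ∈ C)
    (hrec : ∀ n, x (n + 1) = (1 - b (n + 1)) • x n + b (n + 1) • (T (x n) + e (n + 1))) (n : ℕ) :
    ‖x n - kmSeq T b (x 0) n‖ ≤ ∑ i ∈ range n, b (i + 1) * ‖e (i + 1)‖ := by
  induction n with
  | zero => simp [kmSeq]
  | succ n ih =>
    have hsplit : x (n + 1) - kmSeq T b (x 0) (n + 1)
        = (1 - b (n + 1)) • (x n - kmSeq T b (x 0) n)
          + b (n + 1) • ((T (x n) - T (kmSeq T b (x 0) n)) + e (n + 1)) := by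
      rw [hrec, kmSeq]; module
    rw [hsplit, sum_range_succ]
    calc _ ≤ (1 - b (n + 1)) * ∑ i ∈ range n, b (i + 1) * ‖e (i + 1)‖
          + b (n + 1) * (∑ i ∈ range n, b (i + 1) * ‖e (i + 1)‖ + ‖e (n + 1)‖) :=
          norm_one_sub_smul_add_smul_le (hb _) ih
            ((norm_add_le _ _).trans (by gcongr; exact (hT _ (hxC n) _ (hyC n)).trans ih))
      _ = _ := by ring

theorem norm_sub_apply_le_of_restart (hC : Convex ℝ C) (hTC : ∀ x ∈ C, T x ∈ C)
    (hT : ∀ x ∈ C, ∀ y ∈ C, ‖T x - T y‖ ≤ ‖x - y‖) (hb : ∀ k, b k ∈ Set.Icc (0 : ℝ) 1)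
    {x : ℕ → X} {e : ℕ → X} (hxC : ∀ n, x n ∈ C)
    (hrec : ∀ n, x (n + 1) = (1 - b (n + 1)) • x n + b (n + 1) • (T (x n) + e (n + 1)))
    {κ : ℝ} (hbound : ∀ n, ‖T (x n) - x 0‖ ≤ κ) (hsum : Summable fun k => b (k + 1) * ‖e (k + 1)‖)
    (M k : ℕ) :
    ‖x (M + k) - T (x (M + k))‖
      ≤ 2 * ∑' i, b (i + M + 1) * ‖e (i + M + 1)‖
        + (∑' i, b (i + M + 1) * ‖e (i + M + 1)‖ + κ + ‖x M - x 0‖)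
          * signKernel (fun i => b (M + i)) 1 k k := by
  set σ := ∑' i, b (i + M + 1) * ‖e (i + M + 1)‖
  set y := kmSeq T (fun i => b (M + i)) (x M)
  have hbM : ∀ i, b (M + i) ∈ Set.Icc (0 : ℝ) 1 := fun i => hb _
  have hyC : ∀ i, y i ∈ C := kmSeq_mem hC hTC hbM (hxC M)
  have hclose : ∀ i, ‖x (M + i) - y i‖ ≤ σ := fun i =>
    calc ‖x (M + i) - y i‖ ≤ ∑ j ∈ range i, b (M + j + 1) * ‖e (M + j + 1)‖ :=
          norm_sub_kmSeq_le (x := fun i => x (M + i)) (e := fun i => e (M + i)) hT hbM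
            (fun i => hxC _) hyC (fun i => hrec (M + i)) i
      _ ≤ σ := by
          simp only [add_comm M]
          exact ((summable_nat_add_iff M).2 hsum).sum_le_tsum _ fun j _ =>
            mul_nonneg (hb _).1 (norm_nonneg _)
  have hD : ∀ i, ‖T (y i) - x M‖ ≤ σ + κ + ‖x M - x 0‖ := fun i =>
    calc ‖T (y i) - x M‖
        = ‖(T (y i) - T (x (M + i))) + (T (x (M + i)) - x 0) - (x M - x 0)‖ := by
          congr 1; abel
      _ ≤ σ + κ + ‖x M - x 0‖ := by
          refine norm_sub_le_of_le ((norm_add_le _ _).trans (add_le_add ?_ (hbound _))) le_rfl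
          exact (hT _ (hyC i) _ (hxC _)).trans ((norm_sub_rev _ _).trans_le (hclose i))
  calc ‖x (M + k) - T (x (M + k))‖ ≤ 2 * ‖x (M + k) - y k‖ + ‖T (y k) - y k‖ :=
        norm_sub_apply_le hT (hxC _) (hyC k)
    _ ≤ _ := add_le_add (by gcongr; exact hclose k)
        (norm_apply_kmSeq_sub_kmSeq_le hT hbM hyC hD k)

end Iteration

end KrasnoselskiiMann

open KrasnoselskiiMann

theorem stmt6_general {X : Type*} [NormedAddCommGroup X] [NormedSpace ℝ X]
    (C : Set X) (hconv : Convex ℝ C)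
    (T : X → X) (hTmaps : ∀ x ∈ C, T x ∈ C)
    (hT : ∀ x ∈ C, ∀ y ∈ C, ‖T x - T y‖ ≤ ‖x - y‖)
    (α : ℕ → ℝ) (hα : ∀ n, α n ∈ Set.Icc (0:ℝ) 1)
    (e : ℕ → X)
    (x : ℕ → X) (hxC : ∀ n, x n ∈ C)
    (hrec : ∀ n, x (n + 1)
      = (1 - α (n + 1)) • x n + α (n + 1) • (T (x n) + e (n + 1)))
    (κ : ℝ) (hbound : ∀ n, ‖T (x n) - x 0‖ ≤ κ)
    (hτ : Tendsto (fun n => ∑ k ∈ Finset.Icc 1 n, α k * (1 - α k)) atTop atTop)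
    (hsum : Summable (fun k => α (k + 1) * ‖e (k + 1)‖)) :
    Tendsto (fun n => ‖x n - T (x n)‖) atTop (nhds 0) := by
  refine tendsto_order.2 ⟨fun a ha => .of_forall fun n => ha.trans_le (norm_nonneg _),
    fun ε hε => ?_⟩
  obtain ⟨M, hM⟩ := ((tendsto_order.1 (tendsto_sum_nat_add fun k => α (k + 1) * ‖e (k + 1)‖)).2
    (ε / 4) (by positivity)).exists
  set σ := ∑' k, α (k + M + 1) * ‖e (k + M + 1)‖
  have hlim : Tendsto (fun k => 2 * σ + (σ + κ + ‖x M - x 0‖)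
      * signKernel (fun i => α (M + i)) 1 k k) atTop (𝓝 (2 * σ)) := by
    simpa only [mul_zero, add_zero] using
      ((tendsto_signKernel_one_self (fun i => hα _) (tendsto_tau_comp_add_left hτ M)).const_mul
        (σ + κ + ‖x M - x 0‖)).const_add (2 * σ)
  obtain ⟨K, hK⟩ := eventually_atTop.1 ((tendsto_order.1 hlim).2 ε (by linarith))
  refine eventually_atTop.2 ⟨M + K, fun n hn => ?_⟩
  obtain ⟨k, hk, rfl⟩ : ∃ k, K ≤ k ∧ n = M + k := ⟨n - M, by omega, by omega⟩
  exact (norm_sub_apply_le_of_restart hconv hTmaps hT hα hxC hrec hbound hsum M k).trans_lt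
    (hK k hk)

/-- for the inexact KM iteration with `x n ∈ C` and `‖T x n - x 0‖ ≤ κ`,
if `τ n = ∑_{k=1}^n α k (1-α k) → ∞`, `‖e n‖ → 0` and `∑_k α k ‖e k‖ < ∞`, then
`‖x n - T x n‖ → 0`. -/
theorem stmt6 {X : Type*} [NormedAddCommGroup X] [NormedSpace ℝ X] [CompleteSpace X]
    (C : Set X) (hC : IsClosed C) (hconv : Convex ℝ C)
    (T : X → X) (hTmaps : ∀ x ∈ C, T x ∈ C)
    (hT : ∀ x ∈ C, ∀ y ∈ C, ‖T x - T y‖ ≤ ‖x - y‖)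
    (α : ℕ → ℝ) (hα : ∀ n, α n ∈ Set.Icc (0:ℝ) 1)
    (e : ℕ → X)
    (x : ℕ → X) (hxC : ∀ n, x n ∈ C)
    (hrec : ∀ n, x (n + 1)
      = (1 - α (n + 1)) • x n + α (n + 1) • (T (x n) + e (n + 1)))
    (κ : ℝ) (hbound : ∀ n, ‖T (x n) - x 0‖ ≤ κ)
    (hτ : Tendsto (fun n => ∑ k ∈ Finset.Icc 1 n, α k * (1 - α k)) atTop atTop)
    (he : Tendsto (fun n => ‖e n‖) atTop (nhds 0))
    (hsum : Summable (fun k => α (k + 1) * ‖e (k + 1)‖)) :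
    Tendsto (fun n => ‖x n - T (x n)‖) atTop (nhds 0) :=
  stmt6_general C hconv T hTmaps hT α hα e x hxC hrec κ hbound hτ hsum
end

section
/- Let $T: X \to X$ be a nonexpansive map on a Banach space with $\mathrm{fix}(T) \neq \emptyset$, and let $(x_n)$ be generated by $x_{n+1} = (1-\alpha_{n+1})x_n + \alpha_{n+1}(Tx_n + e_{n+1})$ with $\alpha_n \in [0,1]$. If $S = \sum_{k=1}^\infty \alpha_k \|e_k\| < \infty$, then for all $n$, $\|Tx_n - x_0\| \leq 2\,\mathrm{dist}(x_0, \mathrm{fix}(T)) + S$. -/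
/-- if `T : X → X` is nonexpansive with a fixed point, `(x n)` follows the
inexact KM iteration, and `S = ∑_{k≥1} α k ‖e k‖ < ∞`, then for all `n`,
`‖T (x n) - x 0‖ ≤ 2 dist(x 0, fix T) + S`. -/
theorem stmt7 {X : Type*} [NormedAddCommGroup X] [NormedSpace ℝ X] [CompleteSpace X]
    (T : X → X) (hT : ∀ x y : X, ‖T x - T y‖ ≤ ‖x - y‖)
    (hfix : {y : X | T y = y}.Nonempty)
    (α : ℕ → ℝ) (hα : ∀ n, α n ∈ Set.Icc (0:ℝ) 1)
    (e : ℕ → X)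
    (x : ℕ → X)
    (hrec : ∀ n, x (n + 1)
      = (1 - α (n + 1)) • x n + α (n + 1) • (T (x n) + e (n + 1)))
    (hsum : Summable (fun k => α (k + 1) * ‖e (k + 1)‖)) :
    ∀ n, ‖T (x n) - x 0‖
      ≤ 2 * Metric.infDist (x 0) {y : X | T y = y}
        + ∑' k : ℕ, α (k + 1) * ‖e (k + 1)‖ := by
  intro n
  set S := ∑' k : ℕ, α (k + 1) * ‖e (k + 1)‖ with hSdef
  have hS0 : ∀ k, 0 ≤ α (k + 1) * ‖e (k + 1)‖ := fun k =>
    mul_nonneg (hα (k + 1)).1 (norm_nonneg _)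
  have key : ∀ q : X, T q = q → ∀ m, ‖x m - q‖ ≤ ‖x 0 - q‖ +
      ∑ k ∈ Finset.range m, α (k + 1) * ‖e (k + 1)‖ := by
    intro q hq m
    induction m with
    | zero => simp
    | succ m ih =>
      have ha := hα (m + 1)
      have h1 : x (m + 1) - q = (1 - α (m + 1)) • (x m - q)
          + α (m + 1) • (T (x m) - q) + α (m + 1) • e (m + 1) := by
        rw [hrec m]; module
      have h2 : ‖x (m + 1) - q‖ ≤ (1 - α (m + 1)) * ‖x m - q‖
          + α (m + 1) * ‖x m - q‖ + α (m + 1) * ‖e (m + 1)‖ := by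
        rw [h1]
        refine (norm_add_le _ _).trans ?_
        gcongr
        refine (norm_add_le _ _).trans ?_
        gcongr
        · rw [norm_smul, Real.norm_eq_abs, abs_of_nonneg (by linarith [ha.2])]
        · rw [norm_smul, Real.norm_eq_abs, abs_of_nonneg ha.1]
          gcongr
          · exact ha.1
          · calc ‖T (x m) - q‖ = ‖T (x m) - T q‖ := by rw [hq]
              _ ≤ ‖x m - q‖ := hT _ _
        · rw [norm_smul, Real.norm_eq_abs, abs_of_nonneg ha.1]
      rw [Finset.sum_range_succ]
      have : (1 - α (m + 1)) * ‖x m - q‖ + α (m + 1) * ‖x m - q‖ = ‖x m - q‖ := by ring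
      nlinarith [h2, ih]
  have hbound : ∀ q ∈ {y : X | T y = y},
      (‖T (x n) - x 0‖ - S) / 2 ≤ dist (x 0) q := by
    intro q hq
    have h1 := key q hq n
    have h2 : ∑ k ∈ Finset.range n, α (k + 1) * ‖e (k + 1)‖ ≤ S :=
      Summable.sum_le_tsum _ (fun k _ => hS0 k) hsum
    have h3 : ‖T (x n) - x 0‖ ≤ ‖T (x n) - q‖ + ‖q - x 0‖ := by
      have := norm_add_le (T (x n) - q) (q - x 0); simpa using this
    have h4 : ‖T (x n) - q‖ ≤ ‖x n - q‖ := by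
      calc ‖T (x n) - q‖ = ‖T (x n) - T q‖ := by rw [hq]
        _ ≤ ‖x n - q‖ := hT _ _
    rw [dist_eq_norm]
    have h5 : ‖q - x 0‖ = ‖x 0 - q‖ := norm_sub_rev _ _
    linarith
  by_contra h
  push_neg at h
  have hlt : Metric.infDist (x 0) {y : X | T y = y} < (‖T (x n) - x 0‖ - S) / 2 := by
    linarith
  obtain ⟨q, hq, hdq⟩ := (Metric.infDist_lt_iff hfix).1 hlt
  exact absurd (hbound q hq) (by linarith)
end

section
/- Let $T$ be nonexpansive with a fixed point $x$, and $(x_n)$ generated by the inexact KM iteration with errors $e_n$ satisfying $\sum_{k \geq 1} \alpha_k \|e_k\| < \infty$. Then the limit $\lim_{n \to \infty} \|x_n - x\|$ exists. -/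
open Filter

/-- if `T` is nonexpansive with fixed point `x` and `(x n)` follows the
inexact KM iteration with `∑_{k≥1} α k ‖e k‖ < ∞`, then `lim ‖x n - x‖` exists. -/
theorem stmt9 {X : Type*} [NormedAddCommGroup X] [NormedSpace ℝ X]
    (T : X → X) (hT : ∀ x y : X, ‖T x - T y‖ ≤ ‖x - y‖)
    (x : X) (hx : T x = x)
    (α : ℕ → ℝ) (hα : ∀ n, α n ∈ Set.Icc (0:ℝ) 1)
    (e : ℕ → X)
    (xs : ℕ → X)
    (hrec : ∀ n, xs (n + 1)
      = (1 - α (n + 1)) • xs n + α (n + 1) • (T (xs n) + e (n + 1)))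
    (hsum : Summable (fun k => α (k + 1) * ‖e (k + 1)‖)) :
    ∃ l : ℝ, Tendsto (fun n => ‖xs n - x‖) atTop (nhds l) := by
  set c : ℕ → ℝ := fun k => α (k + 1) * ‖e (k + 1)‖ with hc
  have hc0 : ∀ k, 0 ≤ c k := fun k =>
    mul_nonneg (hα (k + 1)).1 (norm_nonneg _)
  have key : ∀ n, ‖xs (n + 1) - x‖ ≤ ‖xs n - x‖ + c n := by
    intro n
    have ha := hα (n + 1)
    have heq : xs (n + 1) - x
        = (1 - α (n + 1)) • (xs n - x) + α (n + 1) • (T (xs n) - x)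
          + α (n + 1) • e (n + 1) := by
      rw [hrec n]; module
    have hTn : ‖T (xs n) - x‖ ≤ ‖xs n - x‖ := by
      calc ‖T (xs n) - x‖ = ‖T (xs n) - T x‖ := by rw [hx]
        _ ≤ ‖xs n - x‖ := hT _ _
    calc ‖xs (n + 1) - x‖
        ≤ ‖(1 - α (n + 1)) • (xs n - x) + α (n + 1) • (T (xs n) - x)‖
          + ‖α (n + 1) • e (n + 1)‖ := by rw [heq]; exact norm_add_le _ _
      _ ≤ ‖(1 - α (n + 1)) • (xs n - x)‖ + ‖α (n + 1) • (T (xs n) - x)‖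
          + ‖α (n + 1) • e (n + 1)‖ := by gcongr; exact norm_add_le _ _
      _ = (1 - α (n + 1)) * ‖xs n - x‖ + α (n + 1) * ‖T (xs n) - x‖
          + α (n + 1) * ‖e (n + 1)‖ := by
            rw [norm_smul, norm_smul, norm_smul, Real.norm_of_nonneg (by linarith [ha.2]),
              Real.norm_of_nonneg ha.1]
      _ ≤ ‖xs n - x‖ + c n := by
            have := mul_le_mul_of_nonneg_left hTn ha.1
            simp only [hc]; nlinarith
  set g : ℕ → ℝ := fun n => ∑' k, c (k + n) with hg
  have hg0 : ∀ n, 0 ≤ g n := fun n => tsum_nonneg (fun k => hc0 _)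
  have hgrec : ∀ n, g n = c n + g (n + 1) := by
    intro n
    have := Summable.tsum_eq_zero_add ((summable_nat_add_iff n).2 hsum)
    simp only [hg]
    rw [this]
    congr 1
    · simp
    · apply tsum_congr; intro k; ring_nf
  set f : ℕ → ℝ := fun n => ‖xs n - x‖ + g n with hf
  have hanti : Antitone f := by
    apply antitone_nat_of_succ_le
    intro n
    have := key n
    have := hgrec n
    simp only [hf]; linarith
  have hbdd : BddBelow (Set.range f) := by
    refine ⟨0, ?_⟩
    rintro _ ⟨n, rfl⟩
    exact add_nonneg (norm_nonneg _) (hg0 n)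
  have hflim : Tendsto f atTop (nhds (⨅ n, f n)) :=
    tendsto_atTop_ciInf hanti hbdd
  have hglim : Tendsto g atTop (nhds 0) := by
    simpa [hg] using (tendsto_sum_nat_add c)
  refine ⟨(⨅ n, f n) - 0, ?_⟩
  have : (fun n => ‖xs n - x‖) = fun n => f n - g n := by
    funext n; simp [hf]
  rw [this]
  exact hflim.sub hglim
end

section
/- Let $T: C \to C$ be nonexpansive with $T(C)$ relatively compact, and let $(x_n)$ be generated by the inexact KM iteration with $\|x_n - Tx_n\| \to 0$ and $\sum_{k \geq 1} \alpha_k \|e_k\| < \infty$. Then $(x_n)$ converges strongly to a fixed point of $T$. -/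
open Filter

/-- if `T : C → C` is nonexpansive with `T(C)` relatively compact and
`(x n)` follows the inexact KM iteration with `‖x n - T x n‖ → 0` and
`∑_{k≥1} α k ‖e k‖ < ∞`, then `x n` converges strongly to a fixed point of `T`. -/
theorem stmt10 {X : Type*} [NormedAddCommGroup X] [NormedSpace ℝ X] [CompleteSpace X]
    (C : Set X) (hC : IsClosed C) (hconv : Convex ℝ C)
    (T : X → X) (hTmaps : ∀ x ∈ C, T x ∈ C)
    (hT : ∀ x ∈ C, ∀ y ∈ C, ‖T x - T y‖ ≤ ‖x - y‖)
    (hcpt : IsCompact (closure (T '' C)))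
    (α : ℕ → ℝ) (hα : ∀ n, α n ∈ Set.Icc (0:ℝ) 1)
    (e : ℕ → X)
    (x : ℕ → X) (hxC : ∀ n, x n ∈ C)
    (hrec : ∀ n, x (n + 1)
      = (1 - α (n + 1)) • x n + α (n + 1) • (T (x n) + e (n + 1)))
    (hres : Tendsto (fun n => ‖x n - T (x n)‖) atTop (nhds 0))
    (hsum : Summable (fun k => α (k + 1) * ‖e (k + 1)‖)) :
    ∃ p ∈ C, T p = p ∧ Tendsto x atTop (nhds p) := by
  -- extract a convergent subsequence of T (x n)
  have hTC : ∀ n, T (x n) ∈ closure (T '' C) := fun n =>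
    subset_closure ⟨x n, hxC n, rfl⟩
  obtain ⟨p, hpK, φ, hφ, hφlim⟩ := hcpt.tendsto_subseq hTC
  have hpC : p ∈ C := by
    have hsub : closure (T '' C) ⊆ C :=
      closure_minimal (by rintro y ⟨z, hz, rfl⟩; exact hTmaps z hz) hC
    exact hsub hpK
  have hres' : Tendsto (fun n => x n - T (x n)) atTop (nhds 0) :=
    tendsto_zero_iff_norm_tendsto_zero.2 hres
  have hxφ : Tendsto (fun k => x (φ k)) atTop (nhds p) := by
    have h1 : Tendsto (fun k => x (φ k) - T (x (φ k))) atTop (nhds 0) :=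
      hres'.comp hφ.tendsto_atTop
    have := h1.add hφlim
    simpa using this
  have hTp : T p = p := by
    have h1 : Tendsto (fun k => T (x (φ k))) atTop (nhds (T p)) := by
      rw [tendsto_iff_norm_sub_tendsto_zero]
      apply squeeze_zero (fun k => norm_nonneg _)
        (fun k => hT (x (φ k)) (hxC _) p hpC)
      rw [← tendsto_iff_norm_sub_tendsto_zero]
      exact hxφ
    exact tendsto_nhds_unique h1 hφlim
  refine ⟨p, hpC, hTp, ?_⟩
  set a : ℕ → ℝ := fun n => ‖x n - p‖ with ha
  set b : ℕ → ℝ := fun n => α (n + 1) * ‖e (n + 1)‖ with hb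
  have hbnonneg : ∀ n, 0 ≤ b n := fun n =>
    mul_nonneg (hα (n + 1)).1 (norm_nonneg _)
  have hstep : ∀ n, a (n + 1) ≤ a n + b n := by
    intro n
    have hα1 := (hα (n + 1)).1
    have hα2 := (hα (n + 1)).2
    have key : x (n + 1) - p
        = (1 - α (n + 1)) • (x n - p) + α (n + 1) • (T (x n) - p + e (n + 1)) := by
      rw [hrec n]; module
    have h1 : ‖T (x n) - p + e (n + 1)‖ ≤ ‖x n - p‖ + ‖e (n + 1)‖ := by
      calc ‖T (x n) - p + e (n + 1)‖ ≤ ‖T (x n) - p‖ + ‖e (n + 1)‖ := norm_add_le _ _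
        _ ≤ ‖x n - p‖ + ‖e (n + 1)‖ := by
            have := hT (x n) (hxC n) p hpC
            rw [hTp] at this; linarith
    have h2 : a (n + 1) ≤ (1 - α (n + 1)) * ‖x n - p‖
        + α (n + 1) * ‖T (x n) - p + e (n + 1)‖ := by
      rw [ha]
      simp only [key]
      calc ‖(1 - α (n + 1)) • (x n - p) + α (n + 1) • (T (x n) - p + e (n + 1))‖
          ≤ ‖(1 - α (n + 1)) • (x n - p)‖ + ‖α (n + 1) • (T (x n) - p + e (n + 1))‖ :=
            norm_add_le _ _
        _ = (1 - α (n + 1)) * ‖x n - p‖ + α (n + 1) * ‖T (x n) - p + e (n + 1)‖ := by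
            rw [norm_smul, norm_smul, Real.norm_eq_abs, Real.norm_eq_abs,
              abs_of_nonneg (by linarith), abs_of_nonneg hα1]
    have h3 : α (n + 1) * ‖T (x n) - p + e (n + 1)‖
        ≤ α (n + 1) * (‖x n - p‖ + ‖e (n + 1)‖) :=
      mul_le_mul_of_nonneg_left h1 hα1
    simp only [ha, hb]
    nlinarith [h2, h3]
  have hmono : ∀ m n, m ≤ n → a n ≤ a m + ∑ k ∈ Finset.Ico m n, b k := by
    intro m n hmn
    induction n, hmn using Nat.le_induction with
    | base => simp
    | succ n hmn ih =>
        have := hstep n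
        rw [Finset.sum_Ico_succ_top hmn]
        linarith
  -- it suffices to show ‖x n - p‖ → 0
  rw [tendsto_iff_norm_sub_tendsto_zero]
  rw [Metric.tendsto_atTop]
  intro ε hε
  -- tail sums tend to zero
  have htail : Tendsto (fun m => ∑' k, b (k + m)) atTop (nhds 0) := by
    exact tendsto_sum_nat_add b
  have h1 : ∀ᶠ m in atTop, ∑' k, b (k + m) < ε / 2 :=
    (htail.eventually (gt_mem_nhds (by linarith : (0:ℝ) < ε / 2)))
  obtain ⟨N1, hN1⟩ := eventually_atTop.1 h1
  have haφ : Tendsto (fun k => a (φ k)) atTop (nhds 0) := by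
    have := (tendsto_iff_norm_sub_tendsto_zero.1 hxφ)
    exact this
  have h2 : ∀ᶠ k in atTop, a (φ k) < ε / 2 := by
    have := haφ.eventually (gt_mem_nhds (by linarith : (0:ℝ) < ε / 2))
    simpa using this
  have h3 : ∀ᶠ k in atTop, N1 ≤ φ k := hφ.tendsto_atTop.eventually_ge_atTop N1
  obtain ⟨k, hk1, hk2⟩ := (h2.and h3).exists
  refine ⟨φ k, fun n hn => ?_⟩
  have hsum' : Summable (fun j => b (j + φ k)) := (summable_nat_add_iff (φ k)).2 hsum
  have hIco : ∑ j ∈ Finset.Ico (φ k) n, b j ≤ ∑' j, b (j + φ k) := by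
    rw [Finset.sum_Ico_eq_sum_range]
    have : ∀ j, b (φ k + j) = b (j + φ k) := fun j => by rw [add_comm]
    simp only [this]
    exact Summable.sum_le_tsum (Finset.range (n - φ k)) (fun j _ => hbnonneg _) hsum'
  have htailk : ∑' j, b (j + φ k) < ε / 2 := hN1 (φ k) hk2
  have := hmono (φ k) n hn
  have : a n < ε := by linarith
  simpa [ha, dist_eq_norm] using this
end

section
/- Suppose $\|x_n - Tx_n\| \leq \kappa \sigma(\tau_n) + \sum_{i=1}^n 2\alpha_i\epsilon_i \sigma(\tau_n - \tau_i) + 2\epsilon_{n+1}$ where $\sigma(y) = \min\{1, (\pi y)^{-1/2}\}$, $\tau_n = \sum_{k=1}^n \alpha_k(1-\alpha_k)$ with $\alpha_k(1-\alpha_k) \geq \beta > 0$ for all $k$, and $\epsilon_k = \|e_k\|$ with $\sum_{k\geq 1}\|e_k\| < \infty$. Then with $\nu = (\kappa + 2\sqrt{2}\sum_{k\geq 1}\|e_k\|)/\sqrt{\pi\beta}$, for all $n \geq 1$: $\|x_n - Tx_n\| \leq \nu/\sqrt{n} + \sum_{i \geq \lfloor n/2 \rfloor} 2\|e_i\|$.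 -/
open Finset

/-- `σ(y) = min{1, 1/√(π y)}` for `y > 0`, with `σ(y) = 1` for `y ≤ 0`. -/
noncomputable def sigmaKM (y : ℝ) : ℝ :=
  if y ≤ 0 then 1 else min 1 (1 / Real.sqrt (Real.pi * y))

/-- `τ n = ∑_{k=1}^n α k (1 - α k)`. -/
noncomputable def tauKM (α : ℕ → ℝ) (n : ℕ) : ℝ :=
  ∑ k ∈ Finset.Icc 1 n, α k * (1 - α k)

/-!
Split the sum at `m = ⌊n/2⌋`. Since every increment of `τ` is at least `β`, we have
`τ n - τ i ≥ (n - i) β`, so `σ(τ n) ≤ 1/√(π β n)` and, for `i ≤ m`,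
`σ(τ n - τ i) ≤ 1/√(π β n/2) = √2/√(π β n)`. This bounds the `κ`-term and the terms `i ≤ m`
by `ν/√n`. For `i > m` only `α i σ(…) ≤ 1` is used, and these terms together with
`2 ‖e (n+1)‖` form part of the tail `∑_{i ≥ m} 2 ‖e i‖`.
-/

lemma Nat.Icc_one_eq_Ioc_zero (n : ℕ) : Icc 1 n = Ioc 0 n :=
  Icc_add_one_left_eq_Ioc 0 n

lemma sigmaKM_nonneg (y : ℝ) : 0 ≤ sigmaKM y := by
  unfold sigmaKM
  split_ifs
  · exact zero_le_one
  · exact le_min zero_le_one (by positivity)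

lemma sigmaKM_le_one (y : ℝ) : sigmaKM y ≤ 1 := by
  unfold sigmaKM
  split_ifs
  · exact le_rfl
  · exact min_le_left _ _

lemma sigmaKM_le_of_le {c y : ℝ} (hc : 0 < c) (hcy : c ≤ y) :
    sigmaKM y ≤ 1 / Real.sqrt (Real.pi * c) := by
  rw [sigmaKM, if_neg (hc.trans_le hcy).not_ge]
  refine (min_le_right _ _).trans (one_div_le_one_div_of_le (by positivity) ?_)
  gcongr

lemma tauKM_sub_tauKM_ge {α : ℕ → ℝ} {β : ℝ} (hαβ : ∀ k, β ≤ α k * (1 - α k))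
    {i n : ℕ} (hin : i ≤ n) : ((n - i : ℕ) : ℝ) * β ≤ tauKM α n - tauKM α i := by
  have hsplit : tauKM α n = tauKM α i + ∑ k ∈ Ioc i n, α k * (1 - α k) := by
    rw [tauKM, tauKM, Nat.Icc_one_eq_Ioc_zero, Nat.Icc_one_eq_Ioc_zero,
      sum_Ioc_consecutive _ i.zero_le hin]
  have hlow := card_nsmul_le_sum (Ioc i n) (fun k => α k * (1 - α k)) β fun k _ => hαβ k
  rw [Nat.card_Ioc, nsmul_eq_mul] at hlow
  linarith

lemma sigmaKM_tauKM_sub_le {α : ℕ → ℝ} {β : ℝ} (hβ : 0 < β)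
    (hαβ : ∀ k, β ≤ α k * (1 - α k)) {i n : ℕ} {c : ℝ} (hc : 0 < c) (hci : c ≤ (n - i : ℕ)) :
    sigmaKM (tauKM α n - tauKM α i) ≤ 1 / Real.sqrt (Real.pi * β) / Real.sqrt c := by
  have hin : i ≤ n := (Nat.lt_of_sub_pos (by exact_mod_cast hc.trans_le hci)).le
  calc sigmaKM (tauKM α n - tauKM α i) ≤ 1 / Real.sqrt (Real.pi * (c * β)) :=
        sigmaKM_le_of_le (by positivity)
          ((mul_le_mul_of_nonneg_right hci hβ.le).trans (tauKM_sub_tauKM_ge hαβ hin))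
    _ = 1 / Real.sqrt (Real.pi * β) / Real.sqrt c := by
        rw [show Real.pi * (c * β) = Real.pi * β * c by ring, Real.sqrt_mul (by positivity),
          div_div]

lemma two_mul_mul_mul_sigmaKM_le {a t y b : ℝ} (ha : a ∈ Set.Icc (0 : ℝ) 1) (ht : 0 ≤ t)
    (hy : sigmaKM y ≤ b) : 2 * a * t * sigmaKM y ≤ 2 * t * b := by
  have hσ := sigmaKM_nonneg y
  calc 2 * a * t * sigmaKM y ≤ 2 * 1 * t * sigmaKM y := by gcongr; exact ha.2
    _ ≤ 2 * t * b := by rw [mul_one]; gcongr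

lemma sum_Icc_le_tsum_nat_add {f : ℕ → ℝ} (hf : Summable f) (hf0 : ∀ i, 0 ≤ f i) (m k : ℕ) :
    ∑ i ∈ Icc m k, f i ≤ ∑' i, f (m + i) := by
  rw [← Ico_add_one_right_eq_Icc, sum_Ico_eq_sum_range]
  exact ((summable_nat_add_iff m).2 hf).congr (fun i => by rw [add_comm])
    |>.sum_le_tsum _ fun i _ => hf0 _

lemma sum_Ioc_zero_half_le {α : ℕ → ℝ} (hα : ∀ n, α n ∈ Set.Icc (0 : ℝ) 1) {β : ℝ} (hβ : 0 < β)
    (hαβ : ∀ k, β ≤ α k * (1 - α k)) {ε : ℕ → ℝ} (hε : Summable ε) (hε0 : ∀ k, 0 ≤ ε k)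
    {n : ℕ} (hn : 1 ≤ n) :
    ∑ i ∈ Ioc 0 (n / 2), 2 * α i * ε i * sigmaKM (tauKM α n - tauKM α i)
      ≤ 2 * Real.sqrt 2 * (∑' k, ε (k + 1)) / Real.sqrt (Real.pi * β) / Real.sqrt n := by
  set D := Real.sqrt 2 / Real.sqrt (Real.pi * β) / Real.sqrt n
  have hσ : ∀ i ∈ Ioc 0 (n / 2), sigmaKM (tauKM α n - tauKM α i) ≤ D := by
    intro i hi
    have hhalf : (n : ℝ) / 2 ≤ (n - i : ℕ) := by
      have hi' : (i : ℝ) ≤ n / 2 :=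
        (Nat.cast_le.2 (mem_Ioc.1 hi).2).trans (by simpa using Nat.cast_div_le (m := n) (n := 2))
      rw [Nat.cast_sub ((mem_Ioc.1 hi).2.trans (Nat.div_le_self n 2))]
      linarith
    calc sigmaKM (tauKM α n - tauKM α i)
        ≤ 1 / Real.sqrt (Real.pi * β) / Real.sqrt (n / 2) :=
          sigmaKM_tauKM_sub_le hβ hαβ (by positivity) hhalf
      _ = D := by
          rw [Real.sqrt_div' _ zero_le_two, div_div_eq_mul_div]
          ring
  calc ∑ i ∈ Ioc 0 (n / 2), 2 * α i * ε i * sigmaKM (tauKM α n - tauKM α i)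
      ≤ ∑ i ∈ Ioc 0 (n / 2), 2 * ε i * D :=
        sum_le_sum fun i hi => two_mul_mul_mul_sigmaKM_le (hα i) (hε0 i) (hσ i hi)
    _ = 2 * D * ∑ i ∈ Icc 1 (n / 2), ε i := by
        rw [mul_sum, Nat.Icc_one_eq_Ioc_zero]
        exact sum_congr rfl fun i _ => by ring
    _ ≤ 2 * D * ∑' k, ε (1 + k) := by
        gcongr
        exact sum_Icc_le_tsum_nat_add hε hε0 _ _
    _ = 2 * Real.sqrt 2 * (∑' k, ε (k + 1)) / Real.sqrt (Real.pi * β) / Real.sqrt n := by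
        simp only [D, add_comm 1]
        ring

lemma sum_Ioc_half_add_le {α : ℕ → ℝ} (hα : ∀ n, α n ∈ Set.Icc (0 : ℝ) 1) {ε : ℕ → ℝ}
    (hε : Summable ε) (hε0 : ∀ k, 0 ≤ ε k) (n : ℕ) :
    ∑ i ∈ Ioc (n / 2) n, 2 * α i * ε i * sigmaKM (tauKM α n - tauKM α i) + 2 * ε (n + 1)
      ≤ ∑' i, 2 * ε (n / 2 + i) := by
  have h2ε0 : ∀ i, 0 ≤ 2 * ε i := fun i => mul_nonneg zero_le_two (hε0 i)
  calc ∑ i ∈ Ioc (n / 2) n, 2 * α i * ε i * sigmaKM (tauKM α n - tauKM α i) + 2 * ε (n + 1)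
      ≤ ∑ i ∈ Ioc (n / 2) n, 2 * ε i + 2 * ε (n + 1) :=
        add_le_add_left (sum_le_sum fun i _ => (two_mul_mul_mul_sigmaKM_le (hα i) (hε0 i)
          (sigmaKM_le_one _)).trans_eq (mul_one _)) _
    _ = ∑ i ∈ Ioc (n / 2) (n + 1), 2 * ε i := (sum_Ioc_succ_top (Nat.div_le_self n 2) _).symm
    _ ≤ ∑ i ∈ Icc (n / 2) (n + 1), 2 * ε i :=
        sum_le_sum_of_subset_of_nonneg Ioc_subset_Icc_self fun i _ _ => h2ε0 i
    _ ≤ ∑' i, 2 * ε (n / 2 + i) := sum_Icc_le_tsum_nat_add (hε.mul_left 2) h2ε0 _ _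

theorem stmt11_general {X : Type*} [NormedAddCommGroup X]
    (T : X → X) (x : ℕ → X) (e : ℕ → X)
    (α : ℕ → ℝ) (hα : ∀ n, α n ∈ Set.Icc (0:ℝ) 1)
    (β : ℝ) (hβ : 0 < β) (hαβ : ∀ k, β ≤ α k * (1 - α k))
    (hsum : Summable (fun k => ‖e (k + 1)‖))
    (κ : ℝ) (hκ : 0 ≤ κ)
    (hbound : ∀ n, ‖x n - T (x n)‖
      ≤ κ * sigmaKM (tauKM α n)
        + ∑ i ∈ Finset.Icc 1 n, 2 * α i * ‖e i‖ * sigmaKM (tauKM α n - tauKM α i)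
        + 2 * ‖e (n + 1)‖) :
    ∀ n : ℕ, 1 ≤ n → ‖x n - T (x n)‖
      ≤ (κ + 2 * Real.sqrt 2 * ∑' k : ℕ, ‖e (k + 1)‖) / Real.sqrt (Real.pi * β)
          / Real.sqrt n
        + ∑' i : ℕ, 2 * ‖e (n / 2 + i)‖ := by
  intro n hn
  have hε : Summable fun k => ‖e k‖ := (summable_nat_add_iff 1).1 hsum
  have hσ : sigmaKM (tauKM α n) ≤ 1 / Real.sqrt (Real.pi * β) / Real.sqrt n := by
    simpa [tauKM] using sigmaKM_tauKM_sub_le hβ hαβ (i := 0) (n := n) (by positivity) le_rfl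
  have hκσ : κ * sigmaKM (tauKM α n) ≤ κ / Real.sqrt (Real.pi * β) / Real.sqrt n :=
    (mul_le_mul_of_nonneg_left hσ hκ).trans_eq (by ring)
  have hearly := sum_Ioc_zero_half_le hα hβ hαβ hε (fun k => norm_nonneg (e k)) hn
  have hlate := sum_Ioc_half_add_le hα hε (fun k => norm_nonneg (e k)) n
  have hresidual := hbound n
  rw [Nat.Icc_one_eq_Ioc_zero, ← sum_Ioc_consecutive _ (Nat.zero_le _) (Nat.div_le_self n 2)]
    at hresidual
  rw [add_div, add_div]
  linarith

/-- if the residual bound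
`‖x n - T x n‖ ≤ κ σ(τ n) + ∑_{i=1}^n 2 α i ε i σ(τ n - τ i) + 2 ε (n+1)` holds with
`ε k = ‖e k‖`, `α k (1-α k) ≥ β > 0` and `∑ ‖e k‖ < ∞`, then with
`ν = (κ + 2√2 ∑_{k≥1} ‖e k‖)/√(π β)`, for all `n ≥ 1`,
`‖x n - T x n‖ ≤ ν/√n + ∑_{i ≥ ⌊n/2⌋} 2 ‖e i‖`. -/
theorem stmt11 {X : Type*} [NormedAddCommGroup X] [NormedSpace ℝ X]
    (T : X → X) (x : ℕ → X) (e : ℕ → X)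
    (α : ℕ → ℝ) (hα : ∀ n, α n ∈ Set.Icc (0:ℝ) 1)
    (β : ℝ) (hβ : 0 < β) (hαβ : ∀ k, β ≤ α k * (1 - α k))
    (hsum : Summable (fun k => ‖e (k + 1)‖))
    (κ : ℝ) (hκ : 0 ≤ κ)
    (hbound : ∀ n, ‖x n - T (x n)‖
      ≤ κ * sigmaKM (tauKM α n)
        + ∑ i ∈ Finset.Icc 1 n, 2 * α i * ‖e i‖ * sigmaKM (tauKM α n - tauKM α i)
        + 2 * ‖e (n + 1)‖) :
    ∀ n : ℕ, 1 ≤ n → ‖x n - T (x n)‖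
      ≤ (κ + 2 * Real.sqrt 2 * ∑' k : ℕ, ‖e (k + 1)‖) / Real.sqrt (Real.pi * β)
          / Real.sqrt n
        + ∑' i : ℕ, 2 * ‖e (n / 2 + i)‖ :=
  stmt11_general T x e α hα β hβ hαβ hsum κ hκ hbound
end

section
/- For $a > 1$, there is a constant $K_a$ such that $\int_0^t \frac{1}{(s+1)^a \sqrt{t-s}}\, ds \leq K_a/\sqrt{t}$ for all $t \geq 1$. -/
/-!
Split the integral at `s = t/2`: on each half one factor of the integrand is bounded by its value
at `t/2`, so the integrand is at most `(t/2)^(-1/2) (s+1)^(-a) + (t/2)^(-a) (t-s)^(-1/2)`.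
The first term integrates to at most `(t/2)^(-1/2)/(a-1)` because `a > 1`, the second to
`(t/2)^(-a) · 2√t ≤ 2^(a+1)/√t` because `t ≥ 1`.
-/

open MeasureTheory intervalIntegral Real

lemma rpow_neg_mul_rpow_neg_le {x y c p q : ℝ} (hx : 0 ≤ x) (hy : 0 ≤ y) (hc : 0 < c)
    (hxy : 2 * c ≤ x + y) (hp : 0 ≤ p) (hq : 0 ≤ q) :
    x ^ (-p) * y ^ (-q) ≤ c ^ (-q) * x ^ (-p) + c ^ (-p) * y ^ (-q) := by
  have hxp : 0 ≤ x ^ (-p) := rpow_nonneg hx _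
  have hyq : 0 ≤ y ^ (-q) := rpow_nonneg hy _
  rcases le_total c y with hcy | hcx
  · have : y ^ (-q) ≤ c ^ (-q) := rpow_le_rpow_of_nonpos hc hcy (by linarith)
    nlinarith [rpow_nonneg hc.le (-p)]
  · have : x ^ (-p) ≤ c ^ (-p) := rpow_le_rpow_of_nonpos hc (by linarith) (by linarith)
    nlinarith [rpow_nonneg hc.le (-q)]

lemma integral_add_one_rpow_neg_le {a t : ℝ} (ha : 1 < a) (ht : 0 ≤ t) :
    ∫ s in (0:ℝ)..t, (s + 1) ^ (-a) ≤ 1 / (a - 1) := by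
  have h0 : (0:ℝ) ∉ Set.uIcc (0 + 1) (t + 1) := by
    rw [Set.uIcc_of_le (by linarith)]
    exact fun h => by linarith [h.1]
  rw [integral_comp_add_right (fun x : ℝ => x ^ (-a)),
    integral_rpow (Or.inr ⟨by linarith, h0⟩), zero_add, one_rpow,
    show -a + 1 = -(a - 1) by ring, div_neg, ← neg_div, neg_sub]
  have : 0 ≤ (t + 1) ^ (-(a - 1)) := rpow_nonneg (by linarith) _
  gcongr
  linarith

lemma integral_sub_rpow_neg_half (t : ℝ) :
    ∫ s in (0:ℝ)..t, (t - s) ^ (-(1 / 2) : ℝ) = 2 * √t := by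
  rw [integral_comp_sub_left (fun x : ℝ => x ^ (-(1 / 2) : ℝ)), sub_self, sub_zero,
    integral_rpow (Or.inl (by norm_num)), zero_rpow (by norm_num), sqrt_eq_rpow]
  norm_num
  ring

lemma one_div_rpow_mul_sqrt_eq {x y a : ℝ} (hx : 0 ≤ x) (hy : 0 ≤ y) :
    1 / (x ^ a * √y) = x ^ (-a) * y ^ (-(1 / 2) : ℝ) := by
  rw [rpow_neg hx, rpow_neg hy, ← sqrt_eq_rpow, one_div, mul_inv]

lemma integral_one_div_rpow_mul_sqrt_le {a t : ℝ} (ha : 0 ≤ a) (ht : 0 < t) :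
    ∫ s in (0:ℝ)..t, 1 / ((s + 1) ^ a * √(t - s)) ≤
      (t / 2) ^ (-(1 / 2) : ℝ) * (∫ s in (0:ℝ)..t, (s + 1) ^ (-a))
        + (t / 2) ^ (-a) * ∫ s in (0:ℝ)..t, (t - s) ^ (-(1 / 2) : ℝ) := by
  have hint₁ : IntervalIntegrable (fun s : ℝ => (s + 1) ^ (-a)) volume 0 t := by
    refine ContinuousOn.intervalIntegrable (ContinuousOn.rpow_const (by fun_prop) ?_)
    intro s hs
    rw [Set.uIcc_of_le ht.le] at hs
    exact Or.inl (by linarith [hs.1])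
  have hint₂ : IntervalIntegrable (fun s : ℝ => (t - s) ^ (-(1 / 2) : ℝ)) volume 0 t := by
    simpa using ((intervalIntegrable_rpow' (a := 0) (b := t) (r := -(1 / 2))
      (by norm_num)).comp_sub_left t).symm
  rw [← intervalIntegral.integral_const_mul, ← intervalIntegral.integral_const_mul,
    ← integral_add (hint₁.const_mul _) (hint₂.const_mul _),
    integral_of_le ht.le, integral_of_le ht.le]
  have hIoc : ∀ᵐ s ∂volume.restrict (Set.Ioc 0 t), s ∈ Set.Ioc 0 t :=
    ae_restrict_mem measurableSet_Ioc
  refine integral_mono_of_nonneg ?_ ((intervalIntegrable_iff_integrableOn_Ioc_of_le ht.le).mp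
      ((hint₁.const_mul _).add (hint₂.const_mul _))) ?_
  · filter_upwards [hIoc] with s ⟨hs₀, _⟩
    have : 0 < s + 1 := by linarith
    positivity
  filter_upwards [hIoc] with s ⟨hs₀, hst⟩
  rw [one_div_rpow_mul_sqrt_eq (by linarith) (by linarith)]
  exact rpow_neg_mul_rpow_neg_le (by linarith) (by linarith) (by linarith) (by linarith) ha
    (by norm_num)

lemma half_rpow_neg_mul_two_sqrt_le {a t : ℝ} (ha : 1 ≤ a) (ht : 1 ≤ t) :
    (t / 2) ^ (-a) * (2 * √t) ≤ 2 ^ (a + 1) / √t := by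
  have hst : 0 < √t := sqrt_pos.mpr (by linarith)
  have hta : t ≤ t ^ a := by
    simpa using rpow_le_rpow_of_exponent_le ht ha
  rw [rpow_neg (by linarith), div_rpow (by linarith) (by norm_num), inv_div,
    rpow_add_one (by norm_num), le_div_iff₀ hst]
  calc 2 ^ a / t ^ a * (2 * √t) * √t = 2 ^ a * 2 * (√t * √t / t ^ a) := by ring
    _ ≤ 2 ^ a * 2 := by
        rw [mul_self_sqrt (by linarith)]
        exact mul_le_of_le_one_right (by positivity) ((div_le_one (by positivity)).mpr hta)

lemma half_rpow_neg_half {t : ℝ} (ht : 0 ≤ t) : (t / 2) ^ (-(1 / 2) : ℝ) = √2 / √t := by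
  rw [rpow_neg (by positivity), ← sqrt_eq_rpow, sqrt_div' _ (by norm_num : (0:ℝ) ≤ 2), inv_div]

/-- for `a > 1` there is `K` with
`∫_0^t 1/((s+1)^a √(t-s)) ds ≤ K/√t` for all `t ≥ 1`. -/
theorem stmt15 (a : ℝ) (ha : 1 < a) :
    ∃ K : ℝ, ∀ t : ℝ, 1 ≤ t →
      (∫ s in (0:ℝ)..t, 1 / ((s + 1) ^ a * Real.sqrt (t - s)))
        ≤ K / Real.sqrt t := by
  refine ⟨√2 / (a - 1) + 2 ^ (a + 1), fun t ht => ?_⟩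
  have ht₀ : 0 < t := by linarith
  calc (∫ s in (0:ℝ)..t, 1 / ((s + 1) ^ a * √(t - s)))
      ≤ (t / 2) ^ (-(1 / 2) : ℝ) * (∫ s in (0:ℝ)..t, (s + 1) ^ (-a))
        + (t / 2) ^ (-a) * ∫ s in (0:ℝ)..t, (t - s) ^ (-(1 / 2) : ℝ) :=
        integral_one_div_rpow_mul_sqrt_le (by linarith : (0:ℝ) ≤ a) ht₀
    _ ≤ √2 / √t * (1 / (a - 1)) + 2 ^ (a + 1) / √t := by
        rw [integral_sub_rpow_neg_half, half_rpow_neg_half ht₀.le]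
        gcongr
        · exact integral_add_one_rpow_neg_le ha ht₀.le
        · exact half_rpow_neg_mul_two_sqrt_le ha.le ht
    _ = (√2 / (a - 1) + 2 ^ (a + 1)) / √t := by
        rw [add_div, div_mul_div_comm, mul_one, mul_comm (√t), div_div]
end

section
/- Let $(\alpha_n)$ be reals in $[0,1]$ with $\sum_{k\geq 1}\alpha_k = \infty$, and $(\xi_n)$ nonnegative reals with $\sum_{k\geq 1}\alpha_k\xi_k < \infty$. Suppose $(\delta_n)$ are nonnegative reals satisfying $\delta_0 = 0$ and $\delta_n \leq (1-\alpha_n)\delta_{n-1} + \alpha_n\xi_n$ for all $n \geq 1$. Then $\delta_n \to 0$ and $\sum_{k\geq 1}\alpha_k\delta_{k-1} \leq \sum_{i\geq 1}\alpha_i\xi_i < \infty$. -/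
open Filter

/-- if `α n ∈ [0,1]` with `∑_{k≥1} α k = ∞`, `ξ n ≥ 0` with
`∑_{k≥1} α k ξ k < ∞`, and `δ n ≥ 0` satisfies `δ 0 = 0` and
`δ n ≤ (1-α n) δ (n-1) + α n ξ n` for `n ≥ 1`, then `δ n → 0` and
`∑_{k≥1} α k δ (k-1) ≤ ∑_{i≥1} α i ξ i < ∞`. -/
theorem stmt17 (α ξ δ : ℕ → ℝ)
    (hα : ∀ n, α n ∈ Set.Icc (0:ℝ) 1)
    (hαdiv : ¬ Summable (fun k => α (k + 1)))
    (hξ : ∀ n, 0 ≤ ξ n)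
    (hsum : Summable (fun k => α (k + 1) * ξ (k + 1)))
    (hδ : ∀ n, 0 ≤ δ n) (hδ0 : δ 0 = 0)
    (hrec : ∀ n : ℕ, δ (n + 1) ≤ (1 - α (n + 1)) * δ n + α (n + 1) * ξ (n + 1)) :
    Tendsto δ atTop (nhds 0)
    ∧ Summable (fun k => α (k + 1) * δ k)
    ∧ (∑' k : ℕ, α (k + 1) * δ k) ≤ ∑' i : ℕ, α (i + 1) * ξ (i + 1) := by
  set f : ℕ → ℝ := fun k => α (k + 1) * ξ (k + 1) with hfdef
  have hf0 : ∀ k, 0 ≤ f k := fun k => mul_nonneg (hα (k + 1)).1 (hξ _)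
  have hg0 : ∀ k, 0 ≤ α (k + 1) * δ k := fun k => mul_nonneg (hα (k + 1)).1 (hδ _)
  have key : ∀ n, α (n + 1) * δ n ≤ δ n - δ (n + 1) + f n := by
    intro n
    have := hrec n
    simp only [hfdef]
    nlinarith [this]
  have hpart : ∀ N, ∑ k ∈ Finset.range N, α (k + 1) * δ k ≤ ∑' i, f i := by
    intro N
    have h1 : ∑ k ∈ Finset.range N, α (k + 1) * δ k
        ≤ ∑ k ∈ Finset.range N, (δ k - δ (k + 1) + f k) :=
      Finset.sum_le_sum fun k _ => key k
    have h2 : ∑ k ∈ Finset.range N, (δ k - δ (k + 1) + f k)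
        = (δ 0 - δ N) + ∑ k ∈ Finset.range N, f k := by
      rw [Finset.sum_add_distrib, Finset.sum_range_sub' δ N]
    have h3 : ∑ k ∈ Finset.range N, f k ≤ ∑' i, f i :=
      Summable.sum_le_tsum _ (fun i _ => hf0 i) hsum
    have h4 := hδ N
    rw [hδ0] at h2
    linarith
  have hsummg : Summable (fun k => α (k + 1) * δ k) :=
    summable_of_sum_range_le hg0 hpart
  have htsum : (∑' k : ℕ, α (k + 1) * δ k) ≤ ∑' i, f i :=
    Summable.tsum_le_of_sum_range_le hsummg hpart
  -- monotone-type bound: δ n ≤ δ m + tail sum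
  have hmono : ∀ m n, m ≤ n → δ n ≤ δ m + ∑ k ∈ Finset.Ico m n, f k := by
    intro m n hmn
    induction n, hmn using Nat.le_induction with
    | base => simp
    | succ n hmn ih =>
      have h1 : (1 - α (n + 1)) * δ n ≤ δ n := by
        nlinarith [(hα (n + 1)).1, (hα (n + 1)).2, hδ n]
      have h2 : δ (n + 1) ≤ δ n + f n := by
        have := hrec n; simp only [hfdef]; linarith
      rw [Finset.sum_Ico_succ_top hmn]
      linarith
  -- liminf is 0
  have hinf : ∀ N : ℕ, ∀ ε : ℝ, 0 < ε → ∃ n, N ≤ n ∧ δ n < ε := by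
    intro N ε hε
    by_contra h
    push_neg at h
    apply hαdiv
    rw [← summable_nat_add_iff N]
    have hshift : Summable (fun k => α (k + N + 1) * δ (k + N)) :=
      (summable_nat_add_iff N).2 hsummg
    have hcomp : ∀ k : ℕ, α (k + N + 1) ≤ ε⁻¹ * (α (k + N + 1) * δ (k + N)) := by
      intro k
      have hδk : ε ≤ δ (k + N) := h _ (Nat.le_add_left _ _)
      have hαk := (hα (k + N + 1)).1
      have h1 : α (k + N + 1) * ε ≤ α (k + N + 1) * δ (k + N) :=
        mul_le_mul_of_nonneg_left hδk hαk
      rw [ge_iff_le.symm] at h1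
      have h2 : ε⁻¹ * (α (k + N + 1) * ε) ≤ ε⁻¹ * (α (k + N + 1) * δ (k + N)) :=
        mul_le_mul_of_nonneg_left h1 (by positivity)
      calc α (k + N + 1) = ε⁻¹ * (α (k + N + 1) * ε) := by
            field_simp
        _ ≤ _ := h2
    exact Summable.of_nonneg_of_le (fun k => (hα _).1) hcomp (hshift.mul_left ε⁻¹)
  -- tendsto 0
  have htend : Tendsto δ atTop (nhds 0) := by
    rw [Metric.tendsto_atTop]
    intro ε hε
    set S := ∑' i, f i with hS
    have hP : Tendsto (fun n => ∑ k ∈ Finset.range n, f k) atTop (nhds S) :=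
      hsum.hasSum.tendsto_sum_nat
    have hPle : ∀ n, ∑ k ∈ Finset.range n, f k ≤ S := fun n =>
      Summable.sum_le_tsum _ (fun i _ => hf0 i) hsum
    have : ∀ᶠ m in atTop, S - ∑ k ∈ Finset.range m, f k < ε / 2 := by
      have := (tendsto_order.1 hP).1 (S - ε / 2) (by linarith)
      filter_upwards [this] with m hm
      linarith
    obtain ⟨M, hM⟩ := this.exists_forall_of_atTop
    obtain ⟨n₀, hn₀M, hn₀⟩ := hinf M (ε / 2) (by linarith)
    refine ⟨n₀, fun n hn => ?_⟩
    have h1 := hmono n₀ n hn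
    rw [Finset.sum_Ico_eq_sub _ hn] at h1
    have h2 := hM n₀ hn₀M
    have h3 := hPle n
    have hδn := hδ n
    rw [Real.dist_eq, sub_zero, abs_of_nonneg hδn]
    linarith
  exact ⟨htend, hsummg, htsum⟩
end

section
/- Let $X$ be a Banach space, $T: X \to X$ nonexpansive with $Tx = x$, $f: [0,\infty) \to X$ continuous with $\|f(t)\| \leq \epsilon(t)$ for a continuous function $\epsilon$, and let $u$ solve $u'(t) + (I-T)u(t) = f(t)$, $u(0) = x_0$. Then $\theta(t) = \frac12\|u(t)-x\|^2$ satisfies the differential inequality $\frac{d}{dt}\sqrt{2\theta(t)+1} \leq \epsilon(t)$ (wherever the derivative exists), and hence $t \mapsto \sqrt{\|u(t)-x\|^2+1} + \int_t^\infty \epsilon(s)\,ds$ is nonincreasing when $\int_0^\infty \epsilon < \infty$; in particular $\lim_{t\to\infty}\|u(t)-x\|$ exists. -/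
/-!
Put `v = u - x`. Since `T` is nonexpansive and fixes `x`, `v' = g - v` with `‖g‖ ≤ ‖v‖ + ε`.
Comparing the right Dini derivative of `‖v‖` with `ε` gives `‖v b‖ ≤ ‖v a‖ + ∫_a^b ε`, and as
`r ↦ √(r² + 1)` is `1`-Lipschitz the same bound holds for `√(‖v‖² + 1)`. So
`√(‖v t‖² + 1) - ∫_0^t ε` is antitone; this gives the derivative bound, the antitonicity of
`√(‖v t‖² + 1) + ∫_t^∞ ε`, and, since the tail integral tends to `0`, the convergence of `‖v t‖`.
-/

open Filter MeasureTheory Set Topology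

theorem HasDerivWithinAt.eventually_slope_norm_lt_of_sub_self {E : Type*} [NormedAddCommGroup E]
    [NormedSpace ℝ E] {v : ℝ → E} {g : E} {t r : ℝ}
    (hv : HasDerivWithinAt v (g - v t) (Ici t) t) (hr : ‖g‖ - ‖v t‖ < r) :
    ∀ᶠ z in 𝓝[>] t, slope (fun s => ‖v s‖) t z < r := by
  set δ := r - (‖g‖ - ‖v t‖)
  have hδ : 0 < δ := sub_pos.2 hr
  -- The weight `1 + (z - t)` cancels the `- v t` in the derivative, leaving `g`.
  have hw : HasDerivWithinAt (fun z => (1 + (z - t)) • v z) g (Ici t) t := by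
    convert (((hasDerivWithinAt_id t (Ici t)).sub_const t).const_add 1).smul hv using 1
    · rfl
    · simp
  have hslope := hw.Ioi_of_Ici.limsup_slope_norm_le (r := ‖g‖ + δ / 2) (by linarith)
  have hnorm : ∀ᶠ z in 𝓝[>] t, ‖v t‖ - δ / 2 < ‖v z‖ :=
    (hv.continuousWithinAt.norm.mono Ioi_subset_Ici_self).eventually
      (lt_mem_nhds (by linarith))
  filter_upwards [hslope, hnorm, self_mem_nhdsWithin] with z hz hvz (htz : t < z)
  have hzt : 0 < z - t := sub_pos.2 htz
  rw [Real.norm_eq_abs, abs_of_pos hzt, norm_smul, Real.norm_eq_abs,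
    abs_of_pos (by linarith : (0:ℝ) < 1 + (z - t)), sub_self, add_zero, one_smul] at hz
  have hsplit : (z - t)⁻¹ * ((1 + (z - t)) * ‖v z‖ - ‖v t‖)
      = slope (fun s => ‖v s‖) t z + ‖v z‖ := by
    rw [slope_def_field]
    field_simp
    ring
  linarith

theorem norm_le_add_integral_of_hasDerivWithinAt_sub_self {E : Type*} [NormedAddCommGroup E]
    [NormedSpace ℝ E] {v g : ℝ → E} {ε : ℝ → ℝ} {a b : ℝ} (hε : Continuous ε)
    (hv : ContinuousOn v (Icc a b))
    (hv' : ∀ t ∈ Ico a b, HasDerivWithinAt v (g t - v t) (Ici t) t)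
    (hg : ∀ t ∈ Ico a b, ‖g t‖ ≤ ‖v t‖ + ε t) :
    ∀ ⦃t⦄, t ∈ Icc a b → ‖v t‖ ≤ ‖v a‖ + ∫ s in a..t, ε s :=
  image_le_of_liminf_slope_right_le_deriv_boundary (continuous_norm.comp_continuousOn hv)
    (by simp) (by fun_prop)
    (fun t _ => ((hε.integral_hasStrictDerivAt a t).hasDerivAt.const_add _).hasDerivWithinAt)
    fun t ht _ hr =>
      ((hv' t ht).eventually_slope_norm_lt_of_sub_self (by linarith [hg t ht])).frequently

theorem Real.sqrt_sq_add_one_le_add {c d I : ℝ} (hd : 0 ≤ d) (hI : 0 ≤ I) (h : d ≤ c + I) :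
    √(d ^ 2 + 1) ≤ √(c ^ 2 + 1) + I := by
  have hc : c ≤ √(c ^ 2 + 1) := Real.le_sqrt_of_sq_le (by linarith)
  have hsq : √(c ^ 2 + 1) ^ 2 = c ^ 2 + 1 := Real.sq_sqrt (by positivity)
  rw [Real.sqrt_le_left (by positivity)]
  nlinarith

theorem AntitoneOn.exists_tendsto_atTop_of_forall_le {g : ℝ → ℝ} {a c : ℝ}
    (hg : AntitoneOn g (Ici a)) (hc : ∀ t ∈ Ici a, c ≤ g t) : ∃ l, Tendsto g atTop (𝓝 l) := by
  have hanti : Antitone fun t => g (max t a) := fun s t hst =>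
    hg (le_max_right s a) (le_max_right t a) (max_le_max_right a hst)
  refine ⟨_, (tendsto_atTop_ciInf hanti ⟨c, ?_⟩).congr' ?_⟩
  · rintro _ ⟨t, rfl⟩
    exact hc _ (le_max_right t a)
  · filter_upwards [eventually_ge_atTop a] with t ht
    rw [max_eq_left ht]

section EvolutionEquation

variable {X : Type*} [NormedAddCommGroup X] [NormedSpace ℝ X] {T : X → X} {x : X} {f : ℝ → X}
  {ε : ℝ → ℝ} {u : ℝ → X}

theorem antitoneOn_sqrt_norm_sub_sq_add_one_sub_integral
    (hT : ∀ y z : X, ‖T y - T z‖ ≤ ‖y - z‖) (hx : T x = x) (hε : Continuous ε)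
    (hfε : ∀ t ∈ Ici (0:ℝ), ‖f t‖ ≤ ε t)
    (hu : ∀ t ∈ Ici (0:ℝ), HasDerivAt u (f t - (u t - T (u t))) t) :
    AntitoneOn (fun t => √(‖u t - x‖ ^ 2 + 1) - ∫ s in (0:ℝ)..t, ε s) (Ici 0) := by
  intro a ha b hb hab
  -- `u - x` solves `v' = g - v` with `g = f + (T u - T x)`, and `‖T u - T x‖ ≤ ‖u - x‖`.
  have hdist : ‖u b - x‖ ≤ ‖u a - x‖ + ∫ s in a..b, ε s := by
    refine norm_le_add_integral_of_hasDerivWithinAt_sub_self (v := fun t => u t - x)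
      (g := fun t => f t + (T (u t) - x))
      hε (fun t ht => ?_) (fun t ht => ?_) (fun t ht => ?_) (right_mem_Icc.2 hab)
    · exact ((hu t (ha.trans ht.1)).continuousAt.sub continuousAt_const).continuousWithinAt
    · convert ((hu t (ha.trans ht.1)).sub_const x).hasDerivWithinAt using 1
      abel
    · calc ‖f t + (T (u t) - x)‖ ≤ ‖f t‖ + ‖T (u t) - T x‖ := by rw [hx]; exact norm_add_le _ _
        _ ≤ ‖u t - x‖ + ε t := by linarith [hfε t (ha.trans ht.1), hT (u t) x]
  have hI : 0 ≤ ∫ s in a..b, ε s := intervalIntegral.integral_nonneg hab fun s hs =>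
    (norm_nonneg _).trans (hfε s (ha.trans hs.1))
  have hsplit : ∫ s in (0:ℝ)..b, ε s = (∫ s in (0:ℝ)..a, ε s) + ∫ s in a..b, ε s :=
    (intervalIntegral.integral_add_adjacent_intervals (hε.intervalIntegrable _ _)
      (hε.intervalIntegrable _ _)).symm
  have := Real.sqrt_sq_add_one_le_add (norm_nonneg _) hI hdist
  dsimp only
  linarith

theorem antitoneOn_sqrt_norm_sub_sq_add_one_add_integral_Ioi
    (hT : ∀ y z : X, ‖T y - T z‖ ≤ ‖y - z‖) (hx : T x = x) (hε : Continuous ε)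
    (hfε : ∀ t ∈ Ici (0:ℝ), ‖f t‖ ≤ ε t) (hεint : IntegrableOn ε (Ici 0))
    (hu : ∀ t ∈ Ici (0:ℝ), HasDerivAt u (f t - (u t - T (u t))) t) :
    AntitoneOn (fun t => √(‖u t - x‖ ^ 2 + 1) + ∫ s in Ioi t, ε s) (Ici 0) := by
  intro a ha b hb hab
  have hεint' : IntegrableOn ε (Ioi 0) := hεint.mono_set Ioi_subset_Ici_self
  have hmono := antitoneOn_sqrt_norm_sub_sq_add_one_sub_integral hT hx hε hfε hu ha hb hab
  have htail_a := intervalIntegral.integral_Ioi_sub_Ioi hεint' ha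
  have htail_b := intervalIntegral.integral_Ioi_sub_Ioi hεint' hb
  dsimp only at hmono ⊢
  linarith

end EvolutionEquation

theorem stmt19_general {X : Type*} [NormedAddCommGroup X] [NormedSpace ℝ X]
    (T : X → X) (hT : ∀ x y : X, ‖T x - T y‖ ≤ ‖x - y‖)
    (x : X) (hx : T x = x)
    (f : ℝ → X)
    (ε : ℝ → ℝ) (hε : Continuous ε)
    (hfε : ∀ t ∈ Set.Ici (0:ℝ), ‖f t‖ ≤ ε t)
    (hεint : IntegrableOn ε (Set.Ici 0))
    (u : ℝ → X)
    (hu : ∀ t ∈ Set.Ici (0:ℝ), HasDerivAt u (f t - (u t - T (u t))) t) :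
    (∀ t ∈ Set.Ici (0:ℝ), ∀ d : ℝ,
        HasDerivAt (fun s => Real.sqrt (2 * ((1:ℝ)/2 * ‖u s - x‖ ^ 2) + 1)) d t →
        d ≤ ε t)
    ∧ AntitoneOn
        (fun t => Real.sqrt (‖u t - x‖ ^ 2 + 1) + ∫ s in Set.Ioi t, ε s)
        (Set.Ici 0)
    ∧ ∃ l : ℝ, Tendsto (fun t => ‖u t - x‖) atTop (nhds l) := by
  have hH := antitoneOn_sqrt_norm_sub_sq_add_one_sub_integral hT hx hε hfε hu
  have hG := antitoneOn_sqrt_norm_sub_sq_add_one_add_integral_Ioi hT hx hε hfε hεint hu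
  refine ⟨fun t ht d hd => ?_, hG, ?_⟩
  · have hd' : HasDerivAt (fun s => √(‖u s - x‖ ^ 2 + 1)) d t := by
      convert hd using 4
      ring
    have hacc : AccPt t (𝓟 (Ici 0)) := accPt_principal_iff_nhdsWithin.2 <|
      (nhdsGT_neBot t).mono <|
        nhdsWithin_mono t fun s hs => ⟨Ioi_subset_Ici ht hs, ne_of_gt hs⟩
    linarith [(hd'.sub (hε.integral_hasStrictDerivAt 0 t).hasDerivAt).hasDerivWithinAt
      |>.nonpos_of_antitoneOn hacc hH]
  · obtain ⟨l, hl⟩ := hG.exists_tendsto_atTop_of_forall_le (c := 0) fun t ht =>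
      add_nonneg (Real.sqrt_nonneg _) (setIntegral_nonneg measurableSet_Ioi fun s hs =>
        (norm_nonneg _).trans (hfε s (Ioi_subset_Ici ht hs)))
    have hsqrt : Tendsto (fun t => √(‖u t - x‖ ^ 2 + 1)) atTop (𝓝 l) := by
      simpa using hl.sub (tendsto_integral_Ioi_zero (f := ε) (μ := volume) tendsto_id)
    refine ⟨√(l ^ 2 - 1), ((by fun_prop : Continuous fun r : ℝ => √(r ^ 2 - 1)).tendsto l
      |>.comp hsqrt).congr fun t => ?_⟩
    simp [Real.sq_sqrt (by positivity : (0:ℝ) ≤ ‖u t - x‖ ^ 2 + 1)]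

/-- for a solution `u` of the evolution equation
`u'(t) + (I - T) u(t) = f(t)`, `u(0) = x₀`, with `T` nonexpansive, `T x = x`,
`‖f t‖ ≤ ε t` with `ε` continuous and integrable on `[0,∞)`:
(1) `θ(t) = ½‖u t - x‖²` satisfies `(d/dt)√(2θ(t)+1) ≤ ε t` wherever this derivative
exists; (2) `t ↦ √(‖u t - x‖² + 1) + ∫_t^∞ ε` is nonincreasing on `[0,∞)`; and
(3) `lim_{t→∞} ‖u t - x‖` exists. -/
theorem stmt19 {X : Type*} [NormedAddCommGroup X] [NormedSpace ℝ X] [CompleteSpace X]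
    (T : X → X) (hT : ∀ x y : X, ‖T x - T y‖ ≤ ‖x - y‖)
    (x : X) (hx : T x = x)
    (f : ℝ → X) (hf : Continuous f)
    (ε : ℝ → ℝ) (hε : Continuous ε)
    (hfε : ∀ t ∈ Set.Ici (0:ℝ), ‖f t‖ ≤ ε t)
    (hεint : IntegrableOn ε (Set.Ici 0))
    (x₀ : X) (u : ℝ → X) (hu0 : u 0 = x₀)
    (hu : ∀ t ∈ Set.Ici (0:ℝ), HasDerivAt u (f t - (u t - T (u t))) t) :
    (∀ t ∈ Set.Ici (0:ℝ), ∀ d : ℝ,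
        HasDerivAt (fun s => Real.sqrt (2 * ((1:ℝ)/2 * ‖u s - x‖ ^ 2) + 1)) d t →
        d ≤ ε t)
    ∧ AntitoneOn
        (fun t => Real.sqrt (‖u t - x‖ ^ 2 + 1) + ∫ s in Set.Ioi t, ε s)
        (Set.Ici 0)
    ∧ ∃ l : ℝ, Tendsto (fun t => ‖u t - x‖) atTop (nhds l) :=
  stmt19_general T hT x hx f ε hε hfε hεint u hu
end
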